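/- arXiv:0806.1826 — 7 statements merged into one kernel-verified Lean document; each statement's English description precedes it below -/
import Mathlib

section
/- Let 0<α<1 and let A(z) be a complex polynomial of degree m≥0. Let v(z)=Σ_{n=0}^∞ c_n z^n be an entire function satisfying the Gelfond–Leontiev equation (𝔇_α v)(z)=A(z)v(z) for all z∈ℂ, i.e. Σ_{n=1}^∞ c_n β(n) z^{n−1} = A(z)·Σ_{n=0}^∞ c_n z^n where β(n)=Γ(nα+1)/Γ(nα+1−α). Then there exist constants C>0 and μ≥0 such that |v(z)| ≤ C·exp(μ|z|^{(1+m)/α}) for all z∈ℂ; in particular, the order of the entire function v does not exceed (1+m)/α. -/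
open scoped Real

/-- The coefficient sequence `β(n) = Γ(nα+1)/Γ(nα+1-α)` of the Gelfond–Leontiev
generalized differentiation operator of order `α`. -/
noncomputable def glBeta (α : ℝ) (n : ℕ) : ℝ :=
  Real.Gamma (n * α + 1) / Real.Gamma (n * α + 1 - α)

/-!
Comparing coefficients in `𝔇_α v = A v` gives the recurrence
`c_{n+1} β(n+1) = Σ_{k ≤ min(n, m)} a_k c_{n-k}` (`a_k` the coefficients of `A`), and by
Gautschi's inequality (log-convexity of `Γ`) `β(n+1) ≥ ((n+1)α)^α`. With `θ = α/(m+1)` the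
weighted coefficients `|c_n| (n!)^θ` then obey a convolution inequality with a kernel of bounded
partial sums, because `(n+1)! ≤ (n-k)! (n+1)^{m+1}` for `k ≤ min(n, m)`; hence
`|c_n| ≤ D K^n / (n!)^θ`. Summing, `|v(z)| ≤ 2D exp(θ (2K|z|)^{1/θ})`.
-/

open scoped Nat
open Finset

theorem Real.Gamma_add_one_sub_mul_rpow_le {x s : ℝ} (hx : 0 < x) (hs : 0 < s) (hs1 : s < 1) :
    Real.Gamma (x + 1 - s) * x ^ s ≤ Real.Gamma (x + 1) := by
  have hΓ : 0 < Real.Gamma (x + 1) := Real.Gamma_pos_of_pos (by linarith)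
  have hconv := Real.Gamma_mul_add_mul_le_rpow_Gamma_mul_rpow_Gamma hx (by linarith : 0 < x + 1)
    hs (by linarith : 0 < 1 - s) (by ring)
  have hΓx : Real.Gamma x = Real.Gamma (x + 1) / x := by
    rw [Real.Gamma_add_one hx.ne', mul_div_cancel_left₀ _ hx.ne']
  rw [show s * x + (1 - s) * (x + 1) = x + 1 - s by ring, hΓx, Real.div_rpow hΓ.le hx.le,
    div_mul_eq_mul_div, ← Real.rpow_add hΓ, add_sub_cancel, Real.rpow_one] at hconv
  rwa [← le_div_iff₀ (Real.rpow_pos_of_pos hx s)]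

theorem rpow_le_glBeta_succ {α : ℝ} (hα : 0 < α) (hα1 : α < 1) (n : ℕ) :
    (((n : ℝ) + 1) * α) ^ α ≤ glBeta α (n + 1) := by
  have hx : 0 < ((n : ℝ) + 1) * α := by positivity
  unfold glBeta
  push_cast
  rw [le_div_iff₀ (Real.Gamma_pos_of_pos (by linarith)), mul_comm]
  exact Real.Gamma_add_one_sub_mul_rpow_le hx hα hα1

theorem hasFPowerSeriesOnBall_ofScalars_of_forall_hasSum {a : ℕ → ℂ} {f : ℂ → ℂ}
    (h : ∀ z, HasSum (fun n => a n * z ^ n) (f z)) :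
    HasFPowerSeriesOnBall f (FormalMultilinearSeries.ofScalars ℂ a) 0 1 where
  r_le := by
    have : ((1 : NNReal) : ENNReal) ≤ (FormalMultilinearSeries.ofScalars ℂ a).radius :=
      FormalMultilinearSeries.le_radius_of_summable_norm _
        (by simpa using summable_norm_iff.mpr (h 1).summable)
    simpa using this
  r_pos := one_pos
  hasSum := fun {y} _ => by
    simpa [FormalMultilinearSeries.ofScalars_apply_eq, mul_comm] using h y

theorem eq_of_forall_hasSum_pow_mul {a b : ℕ → ℂ} {f : ℂ → ℂ}
    (ha : ∀ z, HasSum (fun n => a n * z ^ n) (f z))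
    (hb : ∀ z, HasSum (fun n => b n * z ^ n) (f z)) : a = b :=
  FormalMultilinearSeries.ofScalars_series_injective ℂ ℂ <|
    HasFPowerSeriesAt.eq_formalMultilinearSeries
      (hasFPowerSeriesOnBall_ofScalars_of_forall_hasSum ha).hasFPowerSeriesAt
      (hasFPowerSeriesOnBall_ofScalars_of_forall_hasSum hb).hasFPowerSeriesAt

theorem Polynomial.hasSum_eval_mul {p : Polynomial ℂ} {c : ℕ → ℂ} {z s : ℂ}
    (h : HasSum (fun n => c n * z ^ n) s) :
    HasSum (fun n => (∑ k ∈ range (n + 1), p.coeff k * c (n - k)) * z ^ n) (p.eval z * s) := by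
  have hp : ∀ k ∉ range (p.natDegree + 1), p.coeff k * z ^ k = 0 := fun k hk => by
    rw [p.coeff_eq_zero_of_natDegree_lt (by simpa using hk), zero_mul]
  have hpz : HasSum (fun k => p.coeff k * z ^ k) (p.eval z) := by
    rw [p.eval_eq_sum_range]
    exact hasSum_sum_of_ne_finset_zero hp
  have hpz_norm : Summable fun k => ‖p.coeff k * z ^ k‖ :=
    summable_of_ne_finset_zero (s := range (p.natDegree + 1)) fun k hk => by
      rw [hp k hk, norm_zero]
  have hprod := hasSum_sum_range_mul_of_summable_norm hpz_norm (summable_norm_iff.mpr h.summable)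
  rw [hpz.tsum_eq, h.tsum_eq] at hprod
  refine hprod.congr_fun fun n => ?_
  rw [sum_mul]
  refine sum_congr rfl fun k hk => ?_
  rw [show z ^ n = z ^ k * z ^ (n - k) by
    rw [← pow_add, Nat.add_sub_cancel' (Nat.lt_succ_iff.mp (mem_range.mp hk))]]
  ring

theorem coeff_succ_mul_glBeta_eq_sum {α : ℝ} {A : Polynomial ℂ} {c : ℕ → ℂ} {v : ℂ → ℂ}
    (hv : ∀ z : ℂ, HasSum (fun n : ℕ => c n * z ^ n) (v z))
    (heq : ∀ z : ℂ,
      HasSum (fun n : ℕ => c (n + 1) * (glBeta α (n + 1) : ℂ) * z ^ n) (A.eval z * v z))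
    (n : ℕ) : c (n + 1) * glBeta α (n + 1) = ∑ k ∈ range (n + 1), A.coeff k * c (n - k) :=
  congrFun (eq_of_forall_hasSum_pow_mul heq fun z => A.hasSum_eval_mul (hv z)) n

theorem rpow_mul_norm_succ_le_of_glBeta_recurrence {α : ℝ} (hα : 0 < α) (hα1 : α < 1)
    {a c : ℕ → ℂ} {n : ℕ}
    (h : c (n + 1) * glBeta α (n + 1) = ∑ k ∈ range (n + 1), a k * c (n - k)) :
    ((n : ℝ) + 1) ^ α * ‖c (n + 1)‖ ≤ ∑ k ∈ range (n + 1), ‖a k‖ / α ^ α * ‖c (n - k)‖ := by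
  have hαα : 0 < α ^ α := Real.rpow_pos_of_pos hα α
  have hβ := rpow_le_glBeta_succ hα hα1 n
  calc ((n : ℝ) + 1) ^ α * ‖c (n + 1)‖
        = (((n : ℝ) + 1) * α) ^ α * ‖c (n + 1)‖ / α ^ α := by
        rw [Real.mul_rpow (by positivity) hα.le]
        field_simp
    _ ≤ glBeta α (n + 1) * ‖c (n + 1)‖ / α ^ α := by gcongr
    _ = ‖∑ k ∈ range (n + 1), a k * c (n - k)‖ / α ^ α := by
        rw [← h, norm_mul, Complex.norm_real, mul_comm,
          Real.norm_of_nonneg ((Real.rpow_nonneg (by positivity) α).trans hβ)]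
    _ ≤ (∑ k ∈ range (n + 1), ‖a k‖ * ‖c (n - k)‖) / α ^ α := by
        gcongr
        exact (norm_sum_le _ _).trans_eq (sum_congr rfl fun k _ => norm_mul _ _)
    _ = ∑ k ∈ range (n + 1), ‖a k‖ / α ^ α * ‖c (n - k)‖ := by
        rw [sum_div]
        exact sum_congr rfl fun k _ => div_mul_eq_mul_div _ _ _ |>.symm

theorem le_mul_pow_of_le_sum_mul {w a : ℕ → ℝ} {K : ℝ} (ha : ∀ k, 0 ≤ a k) (hw0 : 0 ≤ w 0)
    (hK : 1 ≤ K) (haK : ∀ n, ∑ k ∈ range (n + 1), a k ≤ K)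
    (hw : ∀ n, w (n + 1) ≤ ∑ k ∈ range (n + 1), a k * w (n - k)) (n : ℕ) :
    w n ≤ w 0 * K ^ n := by
  induction n using Nat.strong_induction_on with
  | _ n ih =>
    cases n with
    | zero => simp
    | succ n =>
      have hwK : 0 ≤ w 0 * K ^ n := mul_nonneg hw0 (pow_nonneg (zero_le_one.trans hK) n)
      calc w (n + 1) ≤ ∑ k ∈ range (n + 1), a k * w (n - k) := hw n
        _ ≤ ∑ k ∈ range (n + 1), a k * (w 0 * K ^ n) := by
          refine sum_le_sum fun k _ => mul_le_mul_of_nonneg_left ?_ (ha k)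
          exact (ih (n - k) (by omega)).trans
            (mul_le_mul_of_nonneg_left (pow_le_pow_right₀ hK (n.sub_le k)) hw0)
        _ = (∑ k ∈ range (n + 1), a k) * (w 0 * K ^ n) := (sum_mul ..).symm
        _ ≤ K * (w 0 * K ^ n) := mul_le_mul_of_nonneg_right (haK n) hwK
        _ = w 0 * K ^ (n + 1) := by ring

theorem sum_range_le_sum_range_of_eq_zero {a : ℕ → ℝ} {m : ℕ} (ha : ∀ k, 0 ≤ a k)
    (ha_m : ∀ k, m < k → a k = 0) (n : ℕ) :
    ∑ k ∈ range n, a k ≤ ∑ k ∈ range (m + 1), a k := by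
  rcases le_total n (m + 1) with h | h
  · exact sum_le_sum_of_subset_of_nonneg (range_subset_range.mpr h) fun k _ _ => ha k
  · refine (sum_subset (range_subset_range.mpr h) fun k _ hk => ha_m k ?_).ge
    simpa using hk

theorem Nat.succ_factorial_le_factorial_sub_mul_pow {n k m : ℕ} (hkn : k ≤ n) (hkm : k ≤ m) :
    (n + 1)! ≤ (n - k)! * (n + 1) ^ (m + 1) :=
  calc (n + 1)! = (n + 1) * ((n - k)! * n.descFactorial k) := by
        rw [Nat.factorial_succ, Nat.factorial_mul_descFactorial hkn]
    _ ≤ (n + 1) * ((n - k)! * (n + 1) ^ m) := by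
        gcongr
        exact (n.descFactorial_le_pow k).trans
          ((Nat.pow_le_pow_left n.le_succ k).trans (Nat.pow_le_pow_right n.succ_pos hkm))
    _ = (n - k)! * (n + 1) ^ (m + 1) := by ring

theorem mul_factorial_rpow_succ_le_sum {u a : ℕ → ℝ} {α : ℝ} {m : ℕ} (hα : 0 ≤ α)
    (hu : ∀ n, 0 ≤ u n) (ha : ∀ k, 0 ≤ a k) (ha_m : ∀ k, m < k → a k = 0)
    (hrec : ∀ n : ℕ, ((n : ℝ) + 1) ^ α * u (n + 1) ≤ ∑ k ∈ range (n + 1), a k * u (n - k))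
    (n : ℕ) :
    u (n + 1) * (((n + 1)! : ℕ) : ℝ) ^ (α / (m + 1)) ≤
      ∑ k ∈ range (n + 1), a k * (u (n - k) * (((n - k)! : ℕ) : ℝ) ^ (α / (m + 1))) := by
  set θ := α / ((m : ℝ) + 1)
  have hN : (0 : ℝ) < (n : ℝ) + 1 := by positivity
  have hpow : (((n : ℝ) + 1) ^ (m + 1)) ^ θ = ((n : ℝ) + 1) ^ α := by
    rw [← Real.rpow_natCast, ← Real.rpow_mul hN.le]
    push_cast
    rw [mul_div_cancel₀ _ (by positivity)]
  have hterm : ∀ k ∈ range (n + 1), a k * u (n - k) * (((n + 1)! : ℕ) : ℝ) ^ θ ≤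
      ((n : ℝ) + 1) ^ α * (a k * (u (n - k) * (((n - k)! : ℕ) : ℝ) ^ θ)) := fun k hk => by
    rcases le_or_gt k m with hkm | hkm
    · have hfact : (((n + 1)! : ℕ) : ℝ) ≤ (n - k)! * ((n : ℝ) + 1) ^ (m + 1) := by
        exact_mod_cast Nat.succ_factorial_le_factorial_sub_mul_pow
          (Nat.lt_succ_iff.mp (mem_range.mp hk)) hkm
      calc a k * u (n - k) * (((n + 1)! : ℕ) : ℝ) ^ θ
          ≤ a k * u (n - k) * ((((n - k)! : ℕ) : ℝ) * ((n : ℝ) + 1) ^ (m + 1)) ^ θ := by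
            gcongr
            exact mul_nonneg (ha k) (hu _)
        _ = ((n : ℝ) + 1) ^ α * (a k * (u (n - k) * (((n - k)! : ℕ) : ℝ) ^ θ)) := by
            rw [Real.mul_rpow (by positivity) (by positivity), hpow]
            ring
    · simp [ha_m k hkm]
  refine le_of_mul_le_mul_left ?_ (Real.rpow_pos_of_pos hN α)
  calc ((n : ℝ) + 1) ^ α * (u (n + 1) * (((n + 1)! : ℕ) : ℝ) ^ θ)
      = ((n : ℝ) + 1) ^ α * u (n + 1) * (((n + 1)! : ℕ) : ℝ) ^ θ := by ring
    _ ≤ (∑ k ∈ range (n + 1), a k * u (n - k)) * (((n + 1)! : ℕ) : ℝ) ^ θ :=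
        mul_le_mul_of_nonneg_right (hrec n) (by positivity)
    _ = ∑ k ∈ range (n + 1), a k * u (n - k) * (((n + 1)! : ℕ) : ℝ) ^ θ := sum_mul ..
    _ ≤ ∑ k ∈ range (n + 1), ((n : ℝ) + 1) ^ α * (a k * (u (n - k) * (((n - k)! : ℕ) : ℝ) ^ θ)) :=
        sum_le_sum hterm
    _ = _ := (mul_sum ..).symm

theorem mul_factorial_rpow_le_mul_pow {u a : ℕ → ℝ} {α K : ℝ} {m : ℕ} (hα : 0 ≤ α)
    (hu : ∀ n, 0 ≤ u n) (ha : ∀ k, 0 ≤ a k) (ha_m : ∀ k, m < k → a k = 0)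
    (hrec : ∀ n : ℕ, ((n : ℝ) + 1) ^ α * u (n + 1) ≤ ∑ k ∈ range (n + 1), a k * u (n - k))
    (hK : ∑ k ∈ range (m + 1), a k ≤ K) (hK1 : 1 ≤ K) (n : ℕ) :
    u n * ((n ! : ℕ) : ℝ) ^ (α / (m + 1)) ≤ u 0 * K ^ n := by
  simpa using le_mul_pow_of_le_sum_mul
    (w := fun n => u n * ((n ! : ℕ) : ℝ) ^ (α / (m + 1))) ha (by simpa using hu 0) hK1
    (fun n => (sum_range_le_sum_range_of_eq_zero ha ha_m _).trans hK)
    (mul_factorial_rpow_succ_le_sum hα hu ha ha_m hrec) n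

theorem Real.pow_div_factorial_rpow_le_exp {x θ : ℝ} (hx : 0 ≤ x) (hθ : 0 < θ) (n : ℕ) :
    x ^ n / ((n ! : ℕ) : ℝ) ^ θ ≤ Real.exp (θ * x ^ (1 / θ)) := by
  have hy : 0 ≤ x ^ (1 / θ) := Real.rpow_nonneg hx _
  have hpow : ((x ^ (1 / θ)) ^ n) ^ θ = x ^ n := by
    rw [← Real.rpow_natCast, ← Real.rpow_mul hx, ← Real.rpow_mul hx, mul_comm (1 / θ),
      mul_assoc, one_div_mul_cancel hθ.ne', mul_one, Real.rpow_natCast]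
  calc x ^ n / ((n ! : ℕ) : ℝ) ^ θ = ((x ^ (1 / θ)) ^ n / n !) ^ θ := by
        rw [Real.div_rpow (pow_nonneg hy n) (by positivity), hpow]
    _ ≤ Real.exp (x ^ (1 / θ)) ^ θ :=
        Real.rpow_le_rpow (by positivity) (Real.pow_div_factorial_le_exp _ hy n) hθ.le
    _ = Real.exp (θ * x ^ (1 / θ)) := by rw [← Real.exp_mul, mul_comm]

theorem norm_le_of_norm_mul_factorial_rpow_le {c : ℕ → ℂ} {θ D K : ℝ} (hθ : 0 < θ)
    (hK : 0 ≤ K) (hc : ∀ n, ‖c n‖ * ((n ! : ℕ) : ℝ) ^ θ ≤ D * K ^ n) {z w : ℂ}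
    (hw : HasSum (fun n => c n * z ^ n) w) :
    ‖w‖ ≤ 2 * D * Real.exp (θ * (2 * K) ^ (1 / θ) * ‖z‖ ^ (1 / θ)) := by
  have hD : 0 ≤ D := (norm_nonneg _).trans (by simpa using hc 0)
  set E := Real.exp (θ * (2 * K) ^ (1 / θ) * ‖z‖ ^ (1 / θ))
  have hE : Real.exp (θ * (2 * K * ‖z‖) ^ (1 / θ)) = E := by
    rw [Real.mul_rpow (by positivity) (norm_nonneg z), ← mul_assoc]
  have hterm : ∀ n, ‖c n * z ^ n‖ ≤ D * E * (1 / 2) ^ n := fun n => by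
    have hfact : (0 : ℝ) < ((n ! : ℕ) : ℝ) ^ θ := by positivity
    calc ‖c n * z ^ n‖ = ‖c n‖ * ‖z‖ ^ n := by rw [norm_mul, norm_pow]
      _ ≤ D * K ^ n / ((n ! : ℕ) : ℝ) ^ θ * ‖z‖ ^ n := by
          gcongr
          exact (le_div_iff₀ hfact).mpr (hc n)
      _ = D * ((2 * K * ‖z‖) ^ n / ((n ! : ℕ) : ℝ) ^ θ) * (1 / 2) ^ n := by
          rw [mul_pow, mul_pow, one_div_pow]
          field_simp
      _ ≤ D * E * (1 / 2) ^ n := by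
          rw [← hE]
          gcongr
          exact Real.pow_div_factorial_rpow_le_exp (by positivity) hθ n
  calc ‖w‖ ≤ D * E * 2 := hw.norm_le_of_bounded (hasSum_geometric_two.mul_left (D * E)) hterm
    _ = 2 * D * E := by ring

/-- **α-entire solutions.** Let `0 < α < 1`, let `A` be a complex polynomial of degree `m`,
and let `v(z) = Σ cₙ zⁿ` be an entire function satisfying the Gelfond–Leontiev equation
`(𝔇_α v)(z) = A(z) v(z)`, i.e. `Σ_{n≥1} cₙ β(n) z^{n-1} = A(z) · Σ cₙ zⁿ`.  Then there are
constants `C > 0`, `μ ≥ 0` such that `|v(z)| ≤ C exp(μ |z|^{(1+m)/α})` for all `z`;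
in particular the order of `v` is at most `(1+m)/α`. -/
theorem alpha_entire_solution_order_bound
    (α : ℝ) (hα : 0 < α) (hα1 : α < 1)
    (A : Polynomial ℂ) (m : ℕ) (hm : A.natDegree = m)
    (c : ℕ → ℂ) (v : ℂ → ℂ)
    (hv : ∀ z : ℂ, HasSum (fun n : ℕ => c n * z ^ n) (v z))
    (heq : ∀ z : ℂ,
      HasSum (fun n : ℕ => c (n + 1) * (glBeta α (n + 1) : ℂ) * z ^ n) (A.eval z * v z)) :
    ∃ C > (0 : ℝ), ∃ μ ≥ (0 : ℝ), ∀ z : ℂ,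
      ‖v z‖ ≤ C * Real.exp (μ * ‖z‖ ^ ((1 + (m : ℝ)) / α)) := by
  set K := max 1 (∑ k ∈ range (m + 1), ‖A.coeff k‖ / α ^ α)
  have hcoeff : ∀ n, ‖c n‖ * ((n ! : ℕ) : ℝ) ^ (α / (m + 1)) ≤ ‖c 0‖ * K ^ n :=
    mul_factorial_rpow_le_mul_pow hα.le (fun n => norm_nonneg _) (fun k => by positivity)
      (fun k hk => by rw [A.coeff_eq_zero_of_natDegree_lt (hm ▸ hk), norm_zero, zero_div])
      (fun n => rpow_mul_norm_succ_le_of_glBeta_recurrence hα hα1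
        (coeff_succ_mul_glBeta_eq_sum hv heq n))
      (le_max_right _ _) (le_max_left _ _)
  refine ⟨2 * ‖c 0‖ + 1, by positivity, α / (1 + m) * (2 * K) ^ ((1 + (m : ℝ)) / α),
    by positivity, fun z => ?_⟩
  have hvz :=
    norm_le_of_norm_mul_factorial_rpow_le (by positivity) (by positivity) hcoeff (hv z)
  rw [one_div_div, add_comm (m : ℝ) 1] at hvz
  exact hvz.trans (by gcongr; linarith)
end

section
/- Let 0<α<1 and let ρ(t)=Γ(t+1)/Γ(t+1−α) for t∈(−1,∞) (with ρ(α−1)=0, the value at the pole of the denominator, and with Γ(t+1−α) for −1<t<α−1 understood as the value of the meromorphically continued Gamma function). Let γ:ℝ→(−1,∞) be the inverse function of ρ. Let A(z)=Σ_{m=0}^∞ A_m z^m be a power series of n×n complex matrices with positive radius of convergence, where A_0 = diag(λ_1,…,λ_n) with λ_1,…,λ_n ∈ ℝ. Assume the good spectrum condition: γ(λ_j) − γ(λ_i) ∉ {αk : k∈ℕ, k≥1} for all i,j∈{1,…,n}. For k≥0 put R_k = diag(ρ(γ(λ_1)+αk),…,ρ(γ(λ_n)+αk)). Then there exists a unique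 sequence of n×n matrices σ_0=I, σ_1, σ_2, … satisfying σ_k R_k − A_0 σ_k = Σ_{l=0}^{k−1} A_{k−l} σ_l for all k≥1, and the power series S(z)=Σ_{ν=0}^∞ σ_ν z^ν has a positive radius of convergence. -/
attribute [local instance]
  Matrix.linftyOpNormedAddCommGroup Matrix.linftyOpNormedRing

/-- The function `ρ(t) = Γ(t+1)/Γ(t+1-α)`; here `Real.Gamma` is the meromorphically
continued Gamma function (vanishing at its poles), so that `ρ(α-1) = 0` automatically. -/
noncomputable def rhoGamma (α t : ℝ) : ℝ :=
  Real.Gamma (t + 1) / Real.Gamma (t + 1 - α)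

/-!
Let `D_k` be the matrix with entries `ρ(γ(λ_j) + αk) - λ_i`. As `A₀` and `R_k` are diagonal,
`σ_k R_k - A₀ σ_k` is the Hadamard product `σ_k ⊙ D_k`, so the recursion determines `σ_k`
uniquely once no entry of `D_k` vanishes.

On `(-1, ∞)`, `ρ` is strictly increasing: on either side of its zero `α - 1` it is a monotone
expression in `Γ(x)/Γ(x+c) = B(x,c)/Γ(c)`, which decreases strictly in `x` because the integrand
of the Beta integral does. Injectivity of `ρ` turns the good spectrum condition into
`D_k i j ≠ 0` for `k ≥ 1`, and since `ρ` maps `(-1, ∞)` onto `ℝ`, the entries of `D_k` eventually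
exceed the constant `M` of `‖A_m‖ ≤ M μ^m`. From then on
`‖σ_k‖ ≤ Σ_{l<k} μ^(k-l) ‖σ_l‖`, and induction gives `‖σ_k‖ ≤ C (2μ)^k`.
-/

open Set Filter

theorem MonotoneOn.tendsto_atTop_comp {α β ι : Type*} [Preorder α] [Preorder β] {f : α → β}
    {s : Set α} (hf : MonotoneOn f s) (hsurj : SurjOn f s univ) {l : Filter ι} {u : ι → α}
    (hu : Tendsto u l atTop) (hus : ∀ k, u k ∈ s) : Tendsto (f ∘ u) l atTop := by
  refine tendsto_atTop.2 fun b => ?_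
  obtain ⟨a, ha, rfl⟩ := hsurj (mem_univ b)
  exact (tendsto_atTop.1 hu a).mono fun k hk => hf ha (hus k) hk

section Gamma

theorem integral_rpow_mul_one_sub_rpow {x y : ℝ} (hx : 0 < x) (hy : 0 < y) :
    ∫ s in (0:ℝ)..1, s ^ (x - 1) * (1 - s) ^ (y - 1) =
      Real.Gamma x * Real.Gamma y / Real.Gamma (x + y) := by
  apply Complex.ofReal_injective
  rw [← intervalIntegral.integral_ofReal]
  have hbeta := Complex.betaIntegral_eq_Gamma_mul_div x y (by simpa) (by simpa)
  push_cast [← Complex.Gamma_ofReal]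
  rw [← hbeta, Complex.betaIntegral]
  refine intervalIntegral.integral_congr fun s hs => ?_
  rw [uIcc_of_le zero_le_one] at hs
  push_cast [Complex.ofReal_cpow hs.1, Complex.ofReal_cpow (sub_nonneg.2 hs.2)]
  rfl

theorem strictAntiOn_Gamma_div_Gamma_add {c : ℝ} (hc : 0 < c) :
    StrictAntiOn (fun x => Real.Gamma x / Real.Gamma (x + c)) (Ioi 0) := by
  intro x hx y hy hxy
  have hratio : ∀ z : ℝ, 0 < z → Real.Gamma z / Real.Gamma (z + c) =
      (∫ s in (0:ℝ)..1, s ^ (z - 1) * (1 - s) ^ (c - 1)) / Real.Gamma c := fun z hz => by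
    rw [integral_rpow_mul_one_sub_rpow hz hc]
    field_simp [(Real.Gamma_pos_of_pos hc).ne']
  simp only
  rw [hratio x hx, hratio y hy]
  refine div_lt_div_of_pos_right ?_ (Real.Gamma_pos_of_pos hc)
  have hint : ∀ z : ℝ, 0 < z →
      IntervalIntegrable (fun s : ℝ => s ^ (z - 1) * (1 - s) ^ (c - 1)) MeasureTheory.volume 0 1 :=
    fun z hz => intervalIntegral.intervalIntegrable_of_integral_ne_zero <| by
      rw [integral_rpow_mul_one_sub_rpow hz hc]
      have := Real.Gamma_pos_of_pos hz
      have := Real.Gamma_pos_of_pos hc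
      have := Real.Gamma_pos_of_pos (add_pos hz hc)
      positivity
  rw [← sub_pos, ← intervalIntegral.integral_sub (hint x hx) (hint y hy)]
  refine intervalIntegral.intervalIntegral_pos_of_pos_on ((hint x hx).sub (hint y hy))
    (fun s hs => ?_) zero_lt_one
  rw [← sub_mul]
  exact mul_pos (sub_pos.2 (Real.rpow_lt_rpow_of_exponent_gt hs.1 hs.2 (by linarith)))
    (Real.rpow_pos_of_pos (sub_pos.2 hs.2) _)

theorem Gamma_div_Gamma_add_pos {x c : ℝ} (hx : 0 < x) (hc : 0 < c) :
    0 < Real.Gamma x / Real.Gamma (x + c) :=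
  div_pos (Real.Gamma_pos_of_pos hx) (Real.Gamma_pos_of_pos (add_pos hx hc))

theorem rhoGamma_eq_inv_Gamma_div_Gamma_add (α t : ℝ) :
    rhoGamma α t = (Real.Gamma (t + 1 - α) / Real.Gamma (t + 1 - α + α))⁻¹ := by
  rw [inv_div, sub_add_cancel, rhoGamma]

theorem rhoGamma_eq_mul_Gamma_div_Gamma_add (α t : ℝ) :
    rhoGamma α t = (t + 1 - α) * (Real.Gamma (t + 1) / Real.Gamma (t + 1 + (1 - α))) := by
  rcases eq_or_ne (t + 1 - α) 0 with h | h
  · rw [rhoGamma, h, Real.Gamma_zero, div_zero, zero_mul]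
  · rw [rhoGamma, show t + 1 + (1 - α) = t + 1 - α + 1 by ring, Real.Gamma_add_one h,
      mul_div_assoc', mul_div_mul_left _ _ h]

variable {α : ℝ}

theorem rhoGamma_strictMonoOn_Ioc (hα1 : α < 1) :
    StrictMonoOn (rhoGamma α) (Ioc (-1) (α - 1)) := by
  intro s hs t ht hst
  have hs0 : 0 < s + 1 := by linarith [hs.1]
  have ht0 : 0 < t + 1 := by linarith [ht.1]
  have hanti := strictAntiOn_Gamma_div_Gamma_add (sub_pos.2 hα1) hs0 ht0 (by linarith)
  have hpos := Gamma_div_Gamma_add_pos ht0 (sub_pos.2 hα1)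
  rw [rhoGamma_eq_mul_Gamma_div_Gamma_add, rhoGamma_eq_mul_Gamma_div_Gamma_add]
  nlinarith [ht.2]

theorem rhoGamma_strictMonoOn_Ici (hα : 0 < α) :
    StrictMonoOn (rhoGamma α) (Ici (α - 1)) := by
  intro s hs t ht hst
  have ht' : 0 < t + 1 - α := by linarith [mem_Ici.1 hs]
  rw [rhoGamma_eq_inv_Gamma_div_Gamma_add, rhoGamma_eq_inv_Gamma_div_Gamma_add]
  rcases (mem_Ici.1 hs).eq_or_lt with rfl | hs'
  · rw [show α - 1 + 1 - α = 0 by ring, Real.Gamma_zero, zero_div, inv_zero]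
    exact inv_pos.2 (Gamma_div_Gamma_add_pos ht' hα)
  · exact inv_strictAnti₀ (Gamma_div_Gamma_add_pos (by linarith) hα)
      (strictAntiOn_Gamma_div_Gamma_add hα (mem_Ioi.2 (by linarith)) (mem_Ioi.2 ht')
        (by linarith))

theorem rhoGamma_strictMonoOn (hα : 0 < α) (hα1 : α < 1) :
    StrictMonoOn (rhoGamma α) (Ioi (-1)) := by
  rw [← Ioc_union_Ici_eq_Ioi (by linarith : (-1:ℝ) < α - 1)]
  exact (rhoGamma_strictMonoOn_Ioc hα1).union (rhoGamma_strictMonoOn_Ici hα)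
    (isGreatest_Ioc (by linarith)) isLeast_Ici

theorem rhoGamma_add_mul_ne (hα : 0 < α) (hα1 : α < 1) {s t : ℝ} (hs : -1 < s) (ht : -1 < t)
    {k : ℕ} (h : t - s ≠ α * k) : rhoGamma α (s + α * k) ≠ rhoGamma α t := by
  intro heq
  have hs' : s + α * k ∈ Ioi (-1) := mem_Ioi.2 (lt_add_of_lt_of_nonneg hs (by positivity))
  exact h (by linarith [(rhoGamma_strictMonoOn hα hα1).injOn hs' ht heq])

theorem tendsto_rhoGamma_add_mul_atTop (hα : 0 < α) (hα1 : α < 1)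
    (hsurj : SurjOn (rhoGamma α) (Ioi (-1)) univ) {t : ℝ} (ht : -1 < t) :
    Tendsto (fun k : ℕ => rhoGamma α (t + α * k)) atTop atTop :=
  (rhoGamma_strictMonoOn hα hα1).monotoneOn.tendsto_atTop_comp hsurj
    (tendsto_atTop_add_const_left _ _ (tendsto_natCast_atTop_atTop.const_mul_atTop hα))
    fun k => mem_Ioi.2 (lt_add_of_lt_of_nonneg ht (by positivity))

end Gamma

namespace Matrix

variable {m n K : Type*}

theorem mul_diagonal_sub_diagonal_mul [Fintype m] [DecidableEq m] [CommRing K] (X : Matrix m m K)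
    (r l : m → K) : X * diagonal r - diagonal l * X = X ⊙ of fun i j => r j - l i := by
  ext i j
  simp only [sub_apply, mul_diagonal, diagonal_mul, hadamard_apply, of_apply]
  ring

theorem hadamard_eq_iff [Field K] {X Y D : Matrix m n K} (hD : ∀ i j, D i j ≠ 0) :
    X ⊙ D = Y ↔ X = Y ⊙ D.map (·⁻¹) := by
  constructor
  · rintro rfl
    ext i j
    simp [hD i j]
  · rintro rfl
    ext i j
    simp [hD i j]

theorem linfty_opNorm_hadamard_le [Fintype m] [Fintype n] [NormedRing K] (B E : Matrix m n K)
    {c : ℝ} (hc : 0 ≤ c) (hE : ∀ i j, ‖E i j‖ ≤ c) : ‖B ⊙ E‖ ≤ c * ‖B‖ := by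
  lift c to NNReal using hc
  rw [← coe_nnnorm, ← coe_nnnorm, ← NNReal.coe_mul, NNReal.coe_le_coe, linfty_opNNNorm_def,
    linfty_opNNNorm_def, NNReal.mul_finset_sup]
  refine Finset.sup_mono_fun fun i _ => ?_
  rw [Finset.mul_sum]
  refine Finset.sum_le_sum fun j _ => ?_
  rw [hadamard_apply, mul_comm c]
  exact (nnnorm_mul_le _ _).trans (by gcongr; exact hE i j)

end Matrix

open Matrix

section FrobeniusSeq

open Finset

variable {ι K : Type*} [Fintype ι] [DecidableEq ι] [Field K]

/-- Summing over `Fin (k + 1)` makes the recursion visibly well founded; `frobeniusSeq_succ`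
restates it over `range (k + 1)`. -/
noncomputable def frobeniusSeq (A D : ℕ → Matrix ι ι K) : ℕ → Matrix ι ι K
  | 0 => 1
  | k + 1 => (∑ l : Fin (k + 1), A (k + 1 - l) * frobeniusSeq A D l) ⊙ (D (k + 1)).map (·⁻¹)

theorem frobeniusSeq_zero (A D : ℕ → Matrix ι ι K) : frobeniusSeq A D 0 = 1 := by
  rw [frobeniusSeq]

theorem frobeniusSeq_succ (A D : ℕ → Matrix ι ι K) (k : ℕ) :
    frobeniusSeq A D (k + 1) =
      (∑ l ∈ range (k + 1), A (k + 1 - l) * frobeniusSeq A D l) ⊙ (D (k + 1)).map (·⁻¹) := by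
  rw [frobeniusSeq, Fin.sum_univ_eq_sum_range (fun l => A (k + 1 - l) * frobeniusSeq A D l)]

def IsFrobeniusSeq (A D σ : ℕ → Matrix ι ι K) : Prop :=
  σ 0 = 1 ∧ ∀ k, 1 ≤ k → σ k ⊙ D k = ∑ l ∈ range k, A (k - l) * σ l

theorem isFrobeniusSeq_iff {A D σ : ℕ → Matrix ι ι K} (hD : ∀ k, 1 ≤ k → ∀ i j, D k i j ≠ 0) :
    IsFrobeniusSeq A D σ ↔ σ = frobeniusSeq A D := by
  constructor
  · rintro ⟨h0, hsucc⟩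
    funext k
    induction k using Nat.strong_induction_on with
    | _ k ih =>
      rcases k with _ | k
      · rw [h0, frobeniusSeq_zero]
      · rw [(hadamard_eq_iff (hD _ k.succ_pos)).1 (hsucc _ k.succ_pos), frobeniusSeq_succ]
        congr 1
        exact sum_congr rfl fun l hl => by rw [ih l (mem_range.1 hl)]
  · rintro rfl
    refine ⟨frobeniusSeq_zero A D, fun k hk => ?_⟩
    obtain ⟨k, rfl⟩ := Nat.exists_eq_add_of_le' hk
    exact (hadamard_eq_iff (hD _ hk)).2 (frobeniusSeq_succ A D k)

end FrobeniusSeq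

section GeometricBound

open Finset

theorem exists_le_mul_pow_of_le_sum_pow_mul {s : ℕ → ℝ} {μ : ℝ} (hμ : 0 < μ) {K : ℕ}
    (h : ∀ k, K ≤ k → s k ≤ ∑ l ∈ range k, μ ^ (k - l) * s l) :
    ∃ C, ∀ k, s k ≤ C * (2 * μ) ^ k := by
  set C := ∑ k ∈ range K, |s k| / (2 * μ) ^ k
  have hC : 0 ≤ C := sum_nonneg fun k _ => by positivity
  refine ⟨C, fun k => ?_⟩
  induction k using Nat.strong_induction_on with
  | _ k ih =>
    rcases lt_or_ge k K with hk | hk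
    · calc s k ≤ |s k| / (2 * μ) ^ k * (2 * μ) ^ k := by
            rw [div_mul_cancel₀ _ (by positivity)]; exact le_abs_self _
        _ ≤ C * (2 * μ) ^ k := by
            gcongr
            exact single_le_sum (f := fun k => |s k| / (2 * μ) ^ k) (fun _ _ => by positivity)
              (mem_range.2 hk)
    · calc s k ≤ ∑ l ∈ range k, μ ^ (k - l) * (C * (2 * μ) ^ l) :=
            (h k hk).trans (sum_le_sum fun l hl => by gcongr; exact ih l (mem_range.1 hl))
        _ = C * μ ^ k * ∑ l ∈ range k, (2:ℝ) ^ l := by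
            rw [mul_sum]
            refine sum_congr rfl fun l hl => ?_
            rw [mul_pow, ← pow_sub_mul_pow μ (mem_range.1 hl).le]
            ring
        _ ≤ C * (2 * μ) ^ k := by
            rw [mul_pow, mul_comm (2 ^ k), ← mul_assoc]
            gcongr
            rw [geom_sum_eq (by norm_num) k]
            norm_num

theorem exists_summable_mul_pow_of_le_mul_pow {s : ℕ → ℝ} (hs : ∀ k, 0 ≤ s k) {C q : ℝ}
    (hq : 0 < q) (h : ∀ k, s k ≤ C * q ^ k) : ∃ r > 0, Summable fun k => s k * r ^ k := by
  refine ⟨(2 * q)⁻¹, by positivity, ?_⟩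
  refine Summable.of_nonneg_of_le (fun k => mul_nonneg (hs k) (by positivity)) (fun k => ?_)
    ((summable_geometric_two).mul_left C)
  calc s k * (2 * q)⁻¹ ^ k ≤ C * q ^ k * (2 * q)⁻¹ ^ k := by gcongr; exact h k
    _ = C * (1 / 2) ^ k := by
        rw [mul_assoc, ← mul_pow]
        congr 2
        field_simp

end GeometricBound

section Growth

open Finset

variable {ι K : Type*} [Fintype ι] [DecidableEq ι] [NormedField K]

theorem norm_frobeniusSeq_succ_le {A D : ℕ → Matrix ι ι K} {M μ : ℝ} (hM : 0 < M)
    (hA : ∀ m, ‖A m‖ ≤ M * μ ^ m) {k : ℕ} (hD : ∀ i j, M ≤ ‖D (k + 1) i j‖) :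
    ‖frobeniusSeq A D (k + 1)‖ ≤ ∑ l ∈ range (k + 1), μ ^ (k + 1 - l) * ‖frobeniusSeq A D l‖ := by
  rw [frobeniusSeq_succ]
  calc _ ≤ M⁻¹ * ‖∑ l ∈ range (k + 1), A (k + 1 - l) * frobeniusSeq A D l‖ :=
        linfty_opNorm_hadamard_le _ _ (inv_nonneg.2 hM.le) fun i j => by
          rw [map_apply, norm_inv]
          exact inv_anti₀ hM (hD i j)
    _ ≤ M⁻¹ * ∑ l ∈ range (k + 1), M * μ ^ (k + 1 - l) * ‖frobeniusSeq A D l‖ := by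
        gcongr
        refine (norm_sum_le _ _).trans (sum_le_sum fun l _ => ?_)
        exact (norm_mul_le _ _).trans (mul_le_mul_of_nonneg_right (hA _) (norm_nonneg _))
    _ = _ := by
        rw [mul_sum]
        refine sum_congr rfl fun l _ => ?_
        field_simp

theorem exists_summable_norm_frobeniusSeq_mul_pow {A D : ℕ → Matrix ι ι K} {M μ : ℝ}
    (hM : 0 < M) (hμ : 0 < μ) (hA : ∀ m, ‖A m‖ ≤ M * μ ^ m)
    (hD : ∀ᶠ k in atTop, ∀ i j, M ≤ ‖D k i j‖) :
    ∃ r > 0, Summable fun k => ‖frobeniusSeq A D k‖ * r ^ k := by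
  obtain ⟨K, hK⟩ := eventually_atTop.1 hD
  obtain ⟨C, hC⟩ := exists_le_mul_pow_of_le_sum_pow_mul (s := fun k => ‖frobeniusSeq A D k‖) hμ
      (K := K + 1) fun k hk => by
    obtain ⟨k, rfl⟩ : ∃ m, k = m + 1 := ⟨k - 1, by omega⟩
    exact norm_frobeniusSeq_succ_le hM hA (hK _ (by omega))
  exact exists_summable_mul_pow_of_le_mul_pow (fun _ => norm_nonneg _) (by positivity) hC

end Growth

theorem frobenius_good_spectrum_general
    (α : ℝ) (hα : 0 < α) (hα1 : α < 1) (n : ℕ)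
    (γ : ℝ → ℝ) (hγ : ∀ x : ℝ, -1 < γ x ∧ rhoGamma α (γ x) = x)
    (A : ℕ → Matrix (Fin n) (Fin n) ℂ)
    (hconv : ∃ M > (0 : ℝ), ∃ μ > (0 : ℝ), ∀ m : ℕ, ‖A m‖ ≤ M * μ ^ m)
    (lam : Fin n → ℝ)
    (hA0 : A 0 = Matrix.diagonal (fun i => (lam i : ℂ)))
    (hgood : ∀ i j : Fin n, ∀ k : ℕ, 1 ≤ k → γ (lam j) - γ (lam i) ≠ α * k)
    (R : ℕ → Matrix (Fin n) (Fin n) ℂ)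
    (hR : ∀ k : ℕ, R k = Matrix.diagonal (fun i => ((rhoGamma α (γ (lam i) + α * k) : ℝ) : ℂ))) :
    ∃ σ : ℕ → Matrix (Fin n) (Fin n) ℂ,
      (σ 0 = 1 ∧
        ∀ k : ℕ, 1 ≤ k → σ k * R k - A 0 * σ k = ∑ l ∈ Finset.range k, A (k - l) * σ l) ∧
      (∀ σ' : ℕ → Matrix (Fin n) (Fin n) ℂ,
        (σ' 0 = 1 ∧
          ∀ k : ℕ, 1 ≤ k → σ' k * R k - A 0 * σ' k = ∑ l ∈ Finset.range k, A (k - l) * σ' l) →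
        σ' = σ) ∧
      ∃ r > (0 : ℝ), Summable (fun ν : ℕ => ‖σ ν‖ * r ^ ν) := by
  obtain ⟨M, hM, μ, hμ, hA⟩ := hconv
  set D : ℕ → Matrix (Fin n) (Fin n) ℂ := fun k => Matrix.of fun i j =>
    ((rhoGamma α (γ (lam j) + α * k) - lam i : ℝ) : ℂ)
  have hD_ne : ∀ k, 1 ≤ k → ∀ i j, D k i j ≠ 0 := fun k hk i j => by
    simpa [D, sub_eq_zero, (hγ (lam i)).2] using
      rhoGamma_add_mul_ne hα hα1 (hγ (lam j)).1 (hγ (lam i)).1 (hgood j i k hk)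
  have hD_large : ∀ᶠ k in atTop, ∀ i j, M ≤ ‖D k i j‖ := by
    refine eventually_all.2 fun i => eventually_all.2 fun j => ?_
    filter_upwards [(tendsto_rhoGamma_add_mul_atTop hα hα1 (fun x _ => ⟨γ x, (hγ x).1, (hγ x).2⟩)
      (hγ (lam j)).1).eventually_ge_atTop (M + lam i)] with k hk
    simp only [D, Matrix.of_apply, Complex.norm_real, Real.norm_eq_abs]
    exact (by linarith : M ≤ _).trans (le_abs_self _)
  have hrec : ∀ σ : ℕ → Matrix (Fin n) (Fin n) ℂ, (σ 0 = 1 ∧ ∀ k : ℕ, 1 ≤ k →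
      σ k * R k - A 0 * σ k = ∑ l ∈ Finset.range k, A (k - l) * σ l) ↔ σ = frobeniusSeq A D := by
    intro σ
    have hdiag : ∀ k, σ k * R k - A 0 * σ k = σ k ⊙ D k := fun k => by
      rw [hR, hA0, Matrix.mul_diagonal_sub_diagonal_mul]
      congr 1
      ext i j
      simp [D]
    simp only [hdiag, ← isFrobeniusSeq_iff hD_ne, IsFrobeniusSeq]
  exact ⟨frobeniusSeq A D, (hrec _).2 rfl, fun σ' => (hrec σ').1,
    exists_summable_norm_frobeniusSeq_mul_pow hM hμ hA hD_large⟩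

/-- **Frobenius method for systems with good spectrum.**
Let `0 < α < 1`, let `γ : ℝ → (-1,∞)` be the inverse of `ρ`, and let
`A(z) = Σ A_m z^m` be a matrix power series with positive radius of convergence whose
constant term is `A₀ = diag(λ₁, …, λ_n)` with real `λᵢ`.  Assume the good spectrum
condition `γ(λⱼ) - γ(λᵢ) ∉ αℕ⁺`.  With `R_k = diag(ρ(γ(λᵢ) + αk))ᵢ`, there is a unique
sequence of matrices `σ₀ = I, σ₁, σ₂, …` with
`σ_k R_k - A₀ σ_k = Σ_{l<k} A_{k-l} σ_l` for all `k ≥ 1`, and the series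
`S(z) = Σ σ_ν z^ν` has positive radius of convergence. -/
theorem frobenius_good_spectrum
    (α : ℝ) (hα : 0 < α) (hα1 : α < 1) (n : ℕ) (hn : 1 ≤ n)
    (γ : ℝ → ℝ) (hγ : ∀ x : ℝ, -1 < γ x ∧ rhoGamma α (γ x) = x)
    (A : ℕ → Matrix (Fin n) (Fin n) ℂ)
    (hconv : ∃ M > (0 : ℝ), ∃ μ > (0 : ℝ), ∀ m : ℕ, ‖A m‖ ≤ M * μ ^ m)
    (lam : Fin n → ℝ)
    (hA0 : A 0 = Matrix.diagonal (fun i => (lam i : ℂ)))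
    (hgood : ∀ i j : Fin n, ∀ k : ℕ, 1 ≤ k → γ (lam j) - γ (lam i) ≠ α * k)
    (R : ℕ → Matrix (Fin n) (Fin n) ℂ)
    (hR : ∀ k : ℕ, R k = Matrix.diagonal (fun i => ((rhoGamma α (γ (lam i) + α * k) : ℝ) : ℂ))) :
    ∃ σ : ℕ → Matrix (Fin n) (Fin n) ℂ,
      (σ 0 = 1 ∧
        ∀ k : ℕ, 1 ≤ k → σ k * R k - A 0 * σ k = ∑ l ∈ Finset.range k, A (k - l) * σ l) ∧
      (∀ σ' : ℕ → Matrix (Fin n) (Fin n) ℂ,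
        (σ' 0 = 1 ∧
          ∀ k : ℕ, 1 ≤ k → σ' k * R k - A 0 * σ' k = ∑ l ∈ Finset.range k, A (k - l) * σ' l) →
        σ' = σ) ∧
      ∃ r > (0 : ℝ), Summable (fun ν : ℕ => ‖σ ν‖ * r ^ ν) :=
  frobenius_good_spectrum_general α hα hα1 n γ hγ A hconv lam hA0 hgood R hR
end

section
/- Let 0<α<1 be an irrational number which is poorly approximated by rational numbers: there exist ε>0 and c>0 such that |α − p/q| ≥ c·q^{−2−ε} for all positive integers p,q. Then for every t>0 the series Σ_{n=0}^∞ Γ(1−(n+1)α)·t^{−nα} converges absolutely. -/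
/-!
By the reflection formula `Γ(x) Γ(1 - x) = π / sin (π x)` and `|sin (π x)| ≥ 2 |x - round x|`,
the Diophantine condition at `x = (n + 1) α` gives `|Γ(1 - x)| ≤ C (n + 1)^(1 + ε) / Γ(x)`.
Since `Γ(x) ≥ ⌊x - 1⌋! ≥ R^(x - 2) e^(-R)` for every `R ≥ 1`, `Γ((n + 1) α)` outgrows every
geometric sequence, so the terms are dominated by a convergent geometric series.
-/

open Real Filter

theorem two_mul_abs_sub_round_le_abs_sin_pi_mul (x : ℝ) :
    2 * |x - round x| ≤ |sin (π * x)| := by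
  have hshift : |sin (π * x)| = |sin (π * (x - round x))| := by
    rw [mul_sub, mul_comm π (round x : ℝ), sin_sub_int_mul_pi, abs_mul, abs_neg_one_zpow,
      one_mul]
  have hsmall : |π * (x - round x)| ≤ π / 2 := by
    rw [abs_mul, abs_of_pos pi_pos]
    nlinarith [abs_sub_round x, pi_pos]
  calc 2 * |x - round x| = 2 / π * |π * (x - round x)| := by
        rw [abs_mul, abs_of_pos pi_pos]; field_simp
    _ ≤ |sin (π * x)| := hshift ▸ mul_abs_le_abs_sin hsmall

theorem abs_Gamma_mul_Gamma_one_sub_mul_abs_sin_le (x : ℝ) :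
    |Gamma x * Gamma (1 - x)| * |sin (π * x)| ≤ π := by
  rw [Gamma_mul_Gamma_one_sub, abs_div, abs_of_pos pi_pos]
  rcases eq_or_ne (sin (π * x)) 0 with h | h
  · simp [h, pi_pos.le]
  · rw [div_mul_cancel₀ _ (abs_ne_zero.mpr h)]

theorem rpow_sub_two_le_exp_mul_Gamma {R x : ℝ} (hR : 1 ≤ R) (hx : 2 ≤ x) :
    R ^ (x - 2) ≤ exp R * Gamma x := by
  have h2 : 2 ≤ ⌊x⌋₊ := Nat.le_floor (by exact_mod_cast hx)
  obtain ⟨m, hm⟩ : ∃ m : ℕ, ⌊x⌋₊ = m + 1 := ⟨⌊x⌋₊ - 1, by omega⟩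
  have hmx : (m : ℝ) + 1 ≤ x := by exact_mod_cast hm ▸ Nat.floor_le (by linarith)
  have hxm : x < (m : ℝ) + 2 := by
    have := Nat.lt_floor_add_one x; rw [hm] at this; push_cast at this; linarith
  have h2m : (2 : ℝ) ≤ m + 1 := by exact_mod_cast hm ▸ h2
  calc R ^ (x - 2) ≤ R ^ (m : ℝ) := rpow_le_rpow_of_exponent_le hR (by linarith)
    _ = R ^ m := rpow_natCast R m
    _ ≤ exp R * m.factorial := by
        rw [← div_le_iff₀ (by positivity)]; exact pow_div_factorial_le_exp R (by linarith) m
    _ = exp R * Gamma (m + 1) := by rw [Gamma_nat_eq_factorial]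
    _ ≤ exp R * Gamma x := by
        gcongr
        exact Gamma_strictMonoOn_Ici.monotoneOn h2m (by simpa using hx) hmx

theorem natCast_rpow_le_exp_pow {p : ℝ} (hp : 0 ≤ p) (n : ℕ) : (n : ℝ) ^ p ≤ exp p ^ n := by
  calc (n : ℝ) ^ p ≤ exp n ^ p := by
        gcongr; linarith [add_one_le_exp (n : ℝ)]
    _ = exp p ^ n := by rw [← exp_mul, exp_nat_mul]

theorem mul_rpow_one_sub_le_abs_sub_round {α c μ : ℝ}
    (hdio : ∀ p q : ℕ, 0 < p → 0 < q → |α - (p : ℝ) / q| ≥ c * (q : ℝ) ^ (-μ))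
    {q : ℕ} (hq : 0 < q) (hqα : 1 ≤ q * α) :
    c * (q : ℝ) ^ (1 - μ) ≤ |q * α - round (q * α)| := by
  have hround : 0 < round ((q : ℝ) * α) := by
    rw [round_eq, Int.floor_pos]; linarith
  lift round ((q : ℝ) * α) to ℕ using hround.le with p
  have hq' : (0 : ℝ) < q := by exact_mod_cast hq
  calc c * (q : ℝ) ^ (1 - μ) = q * (c * (q : ℝ) ^ (-μ)) := by
        rw [sub_eq_add_neg, rpow_add hq', rpow_one]; ring
    _ ≤ q * |α - p / q| := by gcongr; exact hdio p q (by exact_mod_cast hround) hq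
    _ = |q * α - p| := by
        rw [← abs_of_pos hq', ← abs_mul, abs_of_pos hq', mul_sub, mul_div_cancel₀ _ hq'.ne']

theorem abs_Gamma_mul_Gamma_one_sub_le {α c μ : ℝ} (hc : 0 < c)
    (hdio : ∀ p q : ℕ, 0 < p → 0 < q → |α - (p : ℝ) / q| ≥ c * (q : ℝ) ^ (-μ))
    {q : ℕ} (hq : 0 < q) (hqα : 1 ≤ q * α) :
    |Gamma (q * α) * Gamma (1 - q * α)| ≤ π / (2 * c) * (q : ℝ) ^ (μ - 1) := by
  have hq' : (0 : ℝ) < q := by exact_mod_cast hq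
  have hsin : 2 * c * (q : ℝ) ^ (1 - μ) ≤ |sin (π * (q * α))| := by
    have := mul_rpow_one_sub_le_abs_sub_round hdio hq hqα
    linarith [two_mul_abs_sub_round_le_abs_sin_pi_mul (q * α)]
  have hδ : 0 < 2 * c * (q : ℝ) ^ (1 - μ) := by positivity
  calc |Gamma (q * α) * Gamma (1 - q * α)|
      ≤ π / (2 * c * (q : ℝ) ^ (1 - μ)) := by
        rw [le_div_iff₀ hδ]
        exact (mul_le_mul_of_nonneg_left hsin (abs_nonneg _)).trans
          (abs_Gamma_mul_Gamma_one_sub_mul_abs_sin_le _)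
    _ = π / (2 * c) * (q : ℝ) ^ (μ - 1) := by
        rw [show μ - 1 = -(1 - μ) by ring, rpow_neg hq'.le]; field_simp

theorem abs_Gamma_one_sub_le {α c μ : ℝ} (hα : 0 < α) (hc : 0 < c) (hμ : 1 ≤ μ)
    (hdio : ∀ p q : ℕ, 0 < p → 0 < q → |α - (p : ℝ) / q| ≥ c * (q : ℝ) ^ (-μ))
    {K : ℝ} (hK : 1 ≤ K) {n : ℕ} (hn : 2 ≤ (n + 1) * α) :
    |Gamma (1 - (n + 1) * α)| ≤
      π / (2 * c) * K ^ (2 / α) * exp (K ^ (1 / α)) * (exp (μ - 1) / K) ^ (n + 1) := by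
  set x := ((n : ℝ) + 1) * α with hx
  have hΓ : 0 < Gamma x := Gamma_pos_of_pos (by linarith)
  have hreflect : Gamma x * |Gamma (1 - x)| ≤ π / (2 * c) * exp (μ - 1) ^ (n + 1) := by
    have h := abs_Gamma_mul_Gamma_one_sub_le hc hdio n.succ_pos (by push_cast; linarith)
    push_cast at h
    rw [abs_mul, abs_of_pos hΓ] at h
    exact h.trans (by gcongr; exact_mod_cast natCast_rpow_le_exp_pow (by linarith) (n + 1))
  have hgrowth : K ^ (n + 1) ≤ K ^ (2 / α) * exp (K ^ (1 / α)) * Gamma x := by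
    have hexp : 1 / α * (x - 2) = (n + 1 : ℕ) - 2 / α := by rw [hx]; push_cast; field_simp
    have h := rpow_sub_two_le_exp_mul_Gamma (R := K ^ (1 / α)) (one_le_rpow hK (by positivity)) hn
    rw [← rpow_mul (by linarith), hexp, rpow_sub (by linarith), rpow_natCast,
      div_le_iff₀ (by positivity)] at h
    linarith
  calc |Gamma (1 - x)| ≤ π / (2 * c) * exp (μ - 1) ^ (n + 1) / Gamma x := by
        rw [le_div_iff₀ hΓ]; linarith
    _ ≤ π / (2 * c) * exp (μ - 1) ^ (n + 1) /
          (K ^ (n + 1) / (K ^ (2 / α) * exp (K ^ (1 / α)))) := by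
        gcongr
        rw [div_le_iff₀ (by positivity)]; linarith
    _ = _ := by rw [div_pow]; field_simp

theorem summable_abs_Gamma_one_sub_mul_pow {α c μ : ℝ} (hα : 0 < α) (hc : 0 < c) (hμ : 1 ≤ μ)
    (hdio : ∀ p q : ℕ, 0 < p → 0 < q → |α - (p : ℝ) / q| ≥ c * (q : ℝ) ^ (-μ))
    {s : ℝ} (hs : 0 ≤ s) :
    Summable fun n : ℕ => |Gamma (1 - (n + 1) * α)| * s ^ n := by
  set K := exp (μ - 1) * (s + 1)
  have hK : 1 ≤ K := one_le_mul_of_one_le_of_one_le (one_le_exp (by linarith)) (by linarith)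
  set C := π / (2 * c) * K ^ (2 / α) * exp (K ^ (1 / α))
  have hratio : exp (μ - 1) / K = 1 / (s + 1) := by
    rw [div_mul_cancel_left₀ (exp_pos _).ne', one_div]
  have hgeom : Summable fun n : ℕ => C / (s + 1) * (s / (s + 1)) ^ n :=
    (summable_geometric_of_lt_one (by positivity)
      ((div_lt_one (by positivity)).mpr (by linarith))).mul_left _
  refine hgeom.of_norm_bounded_eventually_nat ?_
  filter_upwards [eventually_ge_atTop ⌈2 / α⌉₊] with n hn
  have hn' : 2 ≤ ((n : ℝ) + 1) * α := by
    rw [← div_le_iff₀ hα]; linarith [(Nat.ceil_le.mp hn : 2 / α ≤ n)]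
  calc ‖|Gamma (1 - (n + 1) * α)| * s ^ n‖ = |Gamma (1 - (n + 1) * α)| * s ^ n := by
        rw [Real.norm_eq_abs, abs_of_nonneg (by positivity)]
    _ ≤ C * (1 / (s + 1)) ^ (n + 1) * s ^ n := by
        gcongr; rw [← hratio]; exact abs_Gamma_one_sub_le hα hc hμ hdio hK hn'
    _ = C / (s + 1) * (s / (s + 1)) ^ n := by rw [div_pow, div_pow]; field_simp; ring

theorem formal_solution_irregular_converges_pointwise_general
    (α : ℝ) (hα : 0 < α)
    (ε c : ℝ) (hε : 0 < ε) (hc : 0 < c)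
    (hdio : ∀ p q : ℕ, 0 < p → 0 < q →
      |α - (p : ℝ) / q| ≥ c * (q : ℝ) ^ (-(2 + ε)))
    (t : ℝ) (ht : 0 < t) :
    Summable (fun n : ℕ => |Real.Gamma (1 - (n + 1) * α) * t ^ (-(n * α))|) := by
  have hpow (n : ℕ) : t ^ (-(n * α)) = (t ^ (-α)) ^ n := by
    rw [← rpow_natCast, ← rpow_mul ht.le]; ring_nf
  simp_rw [abs_mul, abs_of_pos (rpow_pos_of_pos ht _), hpow]
  exact summable_abs_Gamma_one_sub_mul_pow hα hc (by linarith) hdio (rpow_nonneg ht.le _)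

/-- **Pointwise convergence of the formal solution at an irregular singularity.**
Let `0 < α < 1` be irrational and poorly approximated by rational numbers:
`|α - p/q| ≥ c q^{-2-ε}` for all positive integers `p, q` (some `ε, c > 0`).
Then for every `t > 0` the series `Σₙ Γ(1-(n+1)α) t^{-nα}` converges absolutely. -/
theorem formal_solution_irregular_converges_pointwise
    (α : ℝ) (hα : 0 < α) (hα1 : α < 1) (hirr : Irrational α)
    (ε c : ℝ) (hε : 0 < ε) (hc : 0 < c)
    (hdio : ∀ p q : ℕ, 0 < p → 0 < q →
      |α - (p : ℝ) / q| ≥ c * (q : ℝ) ^ (-(2 + ε)))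
    (t : ℝ) (ht : 0 < t) :
    Summable (fun n : ℕ => |Real.Gamma (1 - (n + 1) * α) * t ^ (-(n * α))|) :=
  formal_solution_irregular_converges_pointwise_general α hα ε c hε hc hdio t ht
end

section
/- For every complex number z, the integral ∫_0^∞ x^{z−1}·exp(−(log x)²/4)·sin((π/2)·log x) dx converges absolutely and equals 2√π·e^{z²−π²/4}·sin(πz). -/
open MeasureTheory

lemma mellin_kappa_pointwise (z : ℂ) (t : ℝ) :
    |Real.exp t| • ((Real.exp t : ℂ) ^ (z - 1) *
        ((Real.exp (-(Real.log (Real.exp t)) ^ 2 / 4) *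
          Real.sin (Real.pi / 2 * Real.log (Real.exp t)) : ℝ) : ℂ))
      = (Complex.exp ((-(1/4)) * (t:ℂ) ^ 2 + (z + Real.pi * Complex.I / 2) * t + 0)
          - Complex.exp ((-(1/4)) * (t:ℂ) ^ 2 + (z - Real.pi * Complex.I / 2) * t + 0))
        / (2 * Complex.I) := by
  rw [Real.log_exp, abs_of_pos (Real.exp_pos t)]
  have h1 : (Real.exp t : ℂ) ^ (z - 1) = Complex.exp ((t : ℂ) * (z - 1)) := by
    rw [Complex.ofReal_exp, Complex.cpow_def_of_ne_zero (Complex.exp_ne_zero _),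
      Complex.log_exp (by simp [Real.pi_pos]) (by simp [Real.pi_pos.le])]
  rw [h1]
  push_cast
  rw [Complex.sin]
  have hI := Complex.I_ne_zero
  rw [show -(1/4) * (t:ℂ) ^ 2 + (z + Real.pi * Complex.I / 2) * t + 0
        = ((t:ℂ)*z - (t:ℂ)^2/4) + ((Real.pi:ℂ)/2*(t:ℂ)*Complex.I) from by ring,
      show -(1/4) * (t:ℂ) ^ 2 + (z - Real.pi * Complex.I / 2) * t + 0
        = ((t:ℂ)*z - (t:ℂ)^2/4) - ((Real.pi:ℂ)/2*(t:ℂ)*Complex.I) from by ring,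
      Complex.real_smul, Complex.ofReal_exp]
  rw [show (t:ℂ)*(z-1) = (t:ℂ)*z - t from by ring,
      show (-(t:ℂ)^2/4 : ℂ) = -((t:ℂ)^2/4) from by ring,
      show -((Real.pi:ℂ)/2*(t:ℂ))*Complex.I = -((Real.pi:ℂ)/2*(t:ℂ)*Complex.I) from by ring]
  simp only [Complex.exp_sub, Complex.exp_neg, Complex.exp_add]
  have h2 : Complex.I * Complex.I = -1 := Complex.I_mul_I
  have hexpne := Complex.exp_ne_zero
  field_simp
  ring_nf
  rw [Complex.I_sq]
  ring

/-- **Mellin transform of `κ(x) = exp(-(log x)²/4) sin((π/2) log x)`.**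
For every `z ∈ ℂ`, the integral `∫₀^∞ x^{z-1} exp(-(log x)²/4) sin((π/2) log x) dx`
converges absolutely and equals `2√π e^{z² - π²/4} sin(πz)`. -/
theorem mellin_kappa (z : ℂ) :
    IntegrableOn
      (fun x : ℝ => (x : ℂ) ^ (z - 1) *
        ((Real.exp (-(Real.log x) ^ 2 / 4) * Real.sin (Real.pi / 2 * Real.log x) : ℝ) : ℂ))
      (Set.Ioi (0 : ℝ)) ∧
    ∫ x in Set.Ioi (0 : ℝ),
        (x : ℂ) ^ (z - 1) *
          ((Real.exp (-(Real.log x) ^ 2 / 4) * Real.sin (Real.pi / 2 * Real.log x) : ℝ) : ℂ)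
      = 2 * (Real.sqrt Real.pi : ℂ) * Complex.exp (z ^ 2 - (Real.pi : ℂ) ^ 2 / 4) *
        Complex.sin (Real.pi * z) := by
  have hb : (-(1/4) : ℂ).re < 0 := by norm_num
  set c₁ : ℂ := z + Real.pi * Complex.I / 2 with hc₁
  set c₂ : ℂ := z - Real.pi * Complex.I / 2 with hc₂
  have himg : Real.exp '' Set.univ = Set.Ioi (0:ℝ) := by
    rw [Set.image_univ, Real.range_exp]
  have hderiv : ∀ x ∈ (Set.univ : Set ℝ), HasDerivWithinAt Real.exp (Real.exp x) Set.univ x :=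
    fun x _ => (Real.hasDerivAt_exp x).hasDerivWithinAt
  have hinj : Set.InjOn Real.exp Set.univ := Real.exp_injective.injOn
  have hint1 := integrable_cexp_quadratic' hb c₁ 0
  have hint2 := integrable_cexp_quadratic' hb c₂ 0
  have hfun : (fun t : ℝ => |Real.exp t| • ((Real.exp t : ℂ) ^ (z - 1) *
        ((Real.exp (-(Real.log (Real.exp t)) ^ 2 / 4) *
          Real.sin (Real.pi / 2 * Real.log (Real.exp t)) : ℝ) : ℂ)))
      = fun t : ℝ => (Complex.exp ((-(1/4)) * (t:ℂ) ^ 2 + c₁ * t + 0)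
          - Complex.exp ((-(1/4)) * (t:ℂ) ^ 2 + c₂ * t + 0)) / (2 * Complex.I) :=
    funext (mellin_kappa_pointwise z)
  constructor
  · rw [← himg,
      integrableOn_image_iff_integrableOn_abs_deriv_smul MeasurableSet.univ hderiv hinj]
    refine (integrableOn_univ).mpr ?_
    rw [hfun]
    exact (hint1.sub hint2).div_const _
  · rw [← himg,
      integral_image_eq_integral_abs_deriv_smul MeasurableSet.univ hderiv hinj]
    rw [Measure.restrict_univ, hfun]
    rw [integral_div, integral_sub hint1 hint2,
      integral_cexp_quadratic hb c₁ 0, integral_cexp_quadratic hb c₂ 0]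
    have h4 : ((Real.pi : ℂ) / -(-(1/4))) ^ (1/2 : ℂ) = 2 * Real.sqrt Real.pi := by
      rw [show ((Real.pi:ℂ) / -(-(1/4))) = ((4*Real.pi : ℝ) : ℂ) from by push_cast; ring,
        show (1/2 : ℂ) = ((1/2 : ℝ) : ℂ) from by norm_num,
        ← Complex.ofReal_cpow (by positivity)]
      rw [← Real.sqrt_eq_rpow]
      rw [Real.sqrt_mul (by norm_num) Real.pi,
        show Real.sqrt 4 = 2 from by
          rw [show (4:ℝ) = 2^2 from by norm_num, Real.sqrt_sq (by norm_num)]]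
      push_cast
      ring
    rw [h4,
      show (0 : ℂ) - c₁^2/(4*(-(1/4))) = c₁^2 from by ring,
      show (0 : ℂ) - c₂^2/(4*(-(1/4))) = c₂^2 from by ring]
    have hsq1 : c₁^2 = (z^2 - (Real.pi:ℂ)^2/4) + (Real.pi * z) * Complex.I := by
      rw [hc₁]
      have h2 : Complex.I^2 = -1 := Complex.I_sq
      ring_nf
      rw [h2]
      ring
    have hsq2 : c₂^2 = (z^2 - (Real.pi:ℂ)^2/4) - (Real.pi * z) * Complex.I := by
      rw [hc₂]
      have h2 : Complex.I^2 = -1 := Complex.I_sq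
      ring_nf
      rw [h2]
      ring
    rw [hsq1, hsq2, Complex.sin,
      show -((Real.pi:ℂ) * z) * Complex.I = -((Real.pi:ℂ) * z * Complex.I) from by ring]
    simp only [Complex.exp_add, Complex.exp_sub, Complex.exp_neg]
    have hI : Complex.I ≠ 0 := Complex.I_ne_zero
    have hexpne := Complex.exp_ne_zero
    have h2 : Complex.I * Complex.I = -1 := Complex.I_mul_I
    field_simp
    ring_nf
    rw [Complex.I_sq]
    ring
end

section
/- Let 0<α<1 and let f(z)=Σ_{k=0}^∞ f_k z^k be an entire function. Define (𝔍_α f)(z) = (z/Γ(α))·∫_0^1 (1−t)^{α−1} f(z·t^α) dt. Then for every z∈ℂ, (𝔍_α f)(z) = Σ_{k=0}^∞ (Γ(αk+1)/Γ(αk+1+α))·f_k·z^{k+1}. In particular, if v(z)=Σ_{n=0}^∞ c_n z^n is entire and 𝔇_α denotes the Gelfond–Leontiev operator (𝔇_α v)(z)=Σ_{n=1}^∞ c_n β(n) z^{n−1} with β(n)=Γ(nα+1)/Γ(nα+1−α), then (𝔍_α 𝔇_α v)(z) = v(z) − v(0) for all z∈ℂ. -/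
/-- The Gelfond–Leontiev generalized integration operator
`(𝔍_α f)(z) = (z/Γ(α)) ∫₀¹ (1-t)^{α-1} f(z t^α) dt`. -/
noncomputable def glJ (α : ℝ) (f : ℂ → ℂ) (z : ℂ) : ℂ :=
  (z / (Real.Gamma α : ℂ)) *
    ∫ t in (0 : ℝ)..1, (((1 - t) ^ (α - 1) : ℝ) : ℂ) * f (z * ((t ^ α : ℝ) : ℂ))

open MeasureTheory Set

namespace GLaux

variable {α : ℝ}

lemma integrand_eq (k : ℕ) {t : ℝ} (ht : t ∈ Ioc (0:ℝ) 1) :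
    (((1 - t) ^ (α - 1) * t ^ (α * k) : ℝ) : ℂ) =
      (t : ℂ) ^ (((α * k + 1 : ℝ) : ℂ) - 1) * (1 - (t : ℂ)) ^ (((α : ℝ) : ℂ) - 1) := by
  have ht0 : (0:ℝ) ≤ t := ht.1.le
  have ht1 : (0:ℝ) ≤ 1 - t := by linarith [ht.2]
  rw [Complex.ofReal_mul, Complex.ofReal_cpow ht1, Complex.ofReal_cpow ht0]
  push_cast
  ring

lemma beta_integrable (hα : 0 < α) (k : ℕ) :
    IntegrableOn (fun t : ℝ => (((1 - t) ^ (α - 1) * t ^ (α * k) : ℝ) : ℂ))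
      (Ioc (0:ℝ) 1) volume := by
  have hu : (0:ℝ) < α * k + 1 := by positivity
  have h := Complex.betaIntegral_convergent (u := ((α * k + 1 : ℝ) : ℂ))
    (v := ((α : ℝ) : ℂ)) (by simpa using hu) (by simpa using hα)
  rw [intervalIntegrable_iff_integrableOn_Ioc_of_le zero_le_one] at h
  refine h.congr ?_
  filter_upwards [ae_restrict_mem measurableSet_Ioc] with t ht
  exact (integrand_eq k ht).symm

lemma beta_val (hα : 0 < α) (k : ℕ) :
    ∫ t in Ioc (0:ℝ) 1, (((1 - t) ^ (α - 1) * t ^ (α * k) : ℝ) : ℂ) =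
      (Real.Gamma (α * k + 1) : ℂ) * (Real.Gamma α : ℂ) / (Real.Gamma (α * k + 1 + α) : ℂ) := by
  have hu : (0:ℝ) < α * k + 1 := by positivity
  have key := Complex.Gamma_mul_Gamma_eq_betaIntegral (s := ((α * k + 1 : ℝ) : ℂ))
    (t := ((α : ℝ) : ℂ)) (by simpa using hu) (by simpa using hα)
  have hsum : ((α * k + 1 : ℝ) : ℂ) + ((α : ℝ) : ℂ) = ((α * k + 1 + α : ℝ) : ℂ) := by
    push_cast; ring
  have hGne : (Real.Gamma (α * k + 1 + α) : ℂ) ≠ 0 := by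
    exact_mod_cast (Real.Gamma_pos_of_pos (by positivity)).ne'
  have hint : ∫ t in Ioc (0:ℝ) 1, (((1 - t) ^ (α - 1) * t ^ (α * k) : ℝ) : ℂ) =
      Complex.betaIntegral ((α * k + 1 : ℝ) : ℂ) ((α : ℝ) : ℂ) := by
    rw [Complex.betaIntegral, intervalIntegral.integral_of_le zero_le_one]
    exact setIntegral_congr_fun measurableSet_Ioc fun t ht => integrand_eq k ht
  refine hint.trans ?_
  rw [hsum, Complex.Gamma_ofReal, Complex.Gamma_ofReal, Complex.Gamma_ofReal] at key
  rw [eq_div_iff hGne]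
  linear_combination -key

lemma psi_integrable (hα : 0 < α) (hα1 : α < 1) :
    IntegrableOn (fun t : ℝ => (1 - t) ^ (α - 1)) (Ioc (0:ℝ) 1) volume := by
  have h : IntervalIntegrable (fun x : ℝ => x ^ (α - 1)) volume 0 1 :=
    intervalIntegral.intervalIntegrable_rpow' (by linarith)
  have h2 := h.comp_sub_left 1
  simp only [sub_zero, sub_self] at h2
  exact (intervalIntegrable_iff_integrableOn_Ioc_of_le zero_le_one).mp h2.symm

lemma part1 (hα : 0 < α) (hα1 : α < 1) (c : ℕ → ℂ) (f : ℂ → ℂ)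
    (hf : ∀ z : ℂ, HasSum (fun k : ℕ => c k * z ^ k) (f z)) (z : ℂ) :
    HasSum (fun k : ℕ =>
      ((Real.Gamma (α * k + 1) / Real.Gamma (α * k + 1 + α) : ℝ) : ℂ) * c k * z ^ (k + 1))
      (glJ α f z) := by
  set μ := volume.restrict (Ioc (0:ℝ) 1) with hμ
  set F : ℕ → ℝ → ℂ := fun k t => c k * z ^ k * (((1 - t) ^ (α - 1) * t ^ (α * k) : ℝ) : ℂ)
    with hF
  have hFint : ∀ k, Integrable (F k) μ := fun k => (beta_integrable hα k).const_mul _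
  have hψ := psi_integrable hα hα1
  -- norm bound
  have hbound : ∀ k, (∫ t, ‖F k t‖ ∂μ) ≤ ‖c k * z ^ k‖ * ∫ t, (1 - t) ^ (α - 1) ∂μ := by
    intro k
    rw [← integral_const_mul]
    refine integral_mono_ae (hFint k).norm (hψ.const_mul _) ?_
    filter_upwards [ae_restrict_mem measurableSet_Ioc] with t ht
    have ht0 : (0:ℝ) ≤ t := ht.1.le
    have ht1 : (0:ℝ) ≤ 1 - t := by linarith [ht.2]
    have htk : t ^ (α * k) ≤ 1 :=
      Real.rpow_le_one ht0 ht.2 (by positivity)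
    have htk0 : (0:ℝ) ≤ t ^ (α * k) := Real.rpow_nonneg ht0 _
    have hψ0 : (0:ℝ) ≤ (1 - t) ^ (α - 1) := Real.rpow_nonneg ht1 _
    simp only [hF, norm_mul, Complex.norm_real]
    rw [Real.norm_of_nonneg hψ0, Real.norm_of_nonneg htk0]
    calc ‖c k‖ * ‖z ^ k‖ * ((1 - t) ^ (α - 1) * t ^ (α * k))
        ≤ ‖c k‖ * ‖z ^ k‖ * ((1 - t) ^ (α - 1) * 1) := by
          gcongr
      _ = ‖c k‖ * ‖z ^ k‖ * (1 - t) ^ (α - 1) := by ring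
  have hsummable : Summable fun k => ∫ t, ‖F k t‖ ∂μ := by
    refine Summable.of_nonneg_of_le (fun k => integral_nonneg fun t => norm_nonneg _)
      hbound ?_
    exact (summable_norm_iff.mpr (hf z).summable).mul_right _
  have hkey := hasSum_integral_of_summable_integral_norm hFint hsummable
  -- identify the tsum with the integrand
  have htsum : ∀ t ∈ Ioc (0:ℝ) 1,
      (∑' k, F k t) = (((1 - t) ^ (α - 1) : ℝ) : ℂ) * f (z * ((t ^ α : ℝ) : ℂ)) := by
    intro t ht
    have ht0 : (0:ℝ) ≤ t := ht.1.le
    have hs := (hf (z * ((t ^ α : ℝ) : ℂ))).mul_left ((((1 - t) ^ (α - 1) : ℝ)) : ℂ)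
    have heq : ∀ k : ℕ, (((1 - t) ^ (α - 1) : ℝ) : ℂ) * (c k * (z * ((t ^ α : ℝ) : ℂ)) ^ k)
        = F k t := by
      intro k
      have : ((t ^ α : ℝ) : ℂ) ^ k = ((t ^ (α * k) : ℝ) : ℂ) := by
        rw [Real.rpow_mul ht0, Real.rpow_natCast, Complex.ofReal_pow]
      simp only [hF, mul_pow, this]
      push_cast
      ring
    exact (tsum_congr fun k => (heq k).symm).trans hs.tsum_eq
  have hIeq : (∫ a, (∑' i, F i a) ∂μ) =
      ∫ t in Ioc (0:ℝ) 1, (((1 - t) ^ (α - 1) : ℝ) : ℂ) * f (z * ((t ^ α : ℝ) : ℂ)) :=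
    setIntegral_congr_fun measurableSet_Ioc htsum
  have hγ : ((Real.Gamma α : ℝ) : ℂ) ≠ 0 := by
    exact_mod_cast (Real.Gamma_pos_of_pos hα).ne'
  have hglJ : glJ α f z = (z / (Real.Gamma α : ℂ)) * ∫ a, (∑' i, F i a) ∂μ := by
    rw [glJ, intervalIntegral.integral_of_le zero_le_one, hIeq]
  have hfinal := hkey.mul_left (z / (Real.Gamma α : ℂ))
  rw [← hglJ] at hfinal
  have hterm : ∀ k : ℕ,
      (z / (Real.Gamma α : ℂ)) * ∫ a, F k a ∂μ =
      ((Real.Gamma (α * k + 1) / Real.Gamma (α * k + 1 + α) : ℝ) : ℂ) * c k * z ^ (k + 1) := by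
    intro k
    have hGne : ((Real.Gamma (α * k + 1 + α) : ℝ) : ℂ) ≠ 0 := by
      exact_mod_cast (Real.Gamma_pos_of_pos (by positivity)).ne'
    have : (∫ a, F k a ∂μ) = c k * z ^ k *
        ((Real.Gamma (α * k + 1) : ℂ) * (Real.Gamma α : ℂ) / (Real.Gamma (α * k + 1 + α) : ℂ)) := by
      rw [hF]
      rw [integral_const_mul]
      rw [beta_val hα k]
    rw [this, Complex.ofReal_div]
    field_simp
    ring
  rw [show (fun k : ℕ =>
      ((Real.Gamma (α * k + 1) / Real.Gamma (α * k + 1 + α) : ℝ) : ℂ) * c k * z ^ (k + 1)) =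
      (fun k : ℕ => (z / (Real.Gamma α : ℂ)) * ∫ a, F k a ∂μ) from
    funext fun k => (hterm k).symm]
  exact hfinal

lemma part2 (hα : 0 < α) (hα1 : α < 1) (c : ℕ → ℂ) (v w : ℂ → ℂ)
    (hv : ∀ z : ℂ, HasSum (fun n : ℕ => c n * z ^ n) (v z))
    (hw : ∀ z : ℂ, HasSum (fun n : ℕ => c (n + 1) * ((glBeta α (n + 1) : ℝ) : ℂ) * z ^ n) (w z))
    (z : ℂ) : glJ α w z = v z - v 0 := by
  have h1 := part1 hα hα1 (fun n => c (n + 1) * ((glBeta α (n + 1) : ℝ) : ℂ)) w hw z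
  have hterm : ∀ k : ℕ,
      ((Real.Gamma (α * k + 1) / Real.Gamma (α * k + 1 + α) : ℝ) : ℂ) *
        (c (k + 1) * ((glBeta α (k + 1) : ℝ) : ℂ)) * z ^ (k + 1) =
      c (k + 1) * z ^ (k + 1) := by
    intro k
    have hratio : (Real.Gamma (α * k + 1) / Real.Gamma (α * k + 1 + α)) * glBeta α (k + 1) = 1 := by
      have e1 : ((k + 1 : ℕ) : ℝ) * α + 1 = α * k + 1 + α := by push_cast; ring
      have e2 : ((k + 1 : ℕ) : ℝ) * α + 1 - α = α * k + 1 := by push_cast; ring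
      rw [glBeta, e2, e1]
      have h1 : Real.Gamma (α * k + 1) ≠ 0 := (Real.Gamma_pos_of_pos (by positivity)).ne'
      have h2 : Real.Gamma (α * k + 1 + α) ≠ 0 := (Real.Gamma_pos_of_pos (by positivity)).ne'
      field_simp
    calc ((Real.Gamma (α * k + 1) / Real.Gamma (α * k + 1 + α) : ℝ) : ℂ) *
          (c (k + 1) * ((glBeta α (k + 1) : ℝ) : ℂ)) * z ^ (k + 1)
        = (((Real.Gamma (α * k + 1) / Real.Gamma (α * k + 1 + α)) * glBeta α (k + 1) : ℝ) : ℂ) *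
            (c (k + 1) * z ^ (k + 1)) := by push_cast; ring
      _ = c (k + 1) * z ^ (k + 1) := by rw [hratio]; simp
  rw [show (fun k : ℕ =>
      ((Real.Gamma (α * k + 1) / Real.Gamma (α * k + 1 + α) : ℝ) : ℂ) *
        (c (k + 1) * ((glBeta α (k + 1) : ℝ) : ℂ)) * z ^ (k + 1)) =
      (fun k : ℕ => c (k + 1) * z ^ (k + 1)) from funext hterm] at h1
  have hv0 : v 0 = c 0 := by
    have h := hasSum_single (f := fun n : ℕ => c n * (0:ℂ) ^ n) 0 fun n hn => by
      simp [zero_pow hn]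
    simpa using (hv 0).unique h
  have h2 : HasSum (fun n : ℕ => c (n + 1) * z ^ (n + 1)) (v z - c 0) := by
    have := (hasSum_nat_add_iff' (f := fun n : ℕ => c n * z ^ n) 1).mpr (hv z)
    simpa using this
  rw [h1.unique h2, hv0]

end GLaux

/-- **The Gelfond–Leontiev integration operator is a right inverse of `𝔇_α`.**
Let `0 < α < 1`.  If `f(z) = Σ f_k z^k` is entire, then
`(𝔍_α f)(z) = Σ_k (Γ(αk+1)/Γ(αk+1+α)) f_k z^{k+1}` for all `z`.  In particular, if
`v(z) = Σ cₙ zⁿ` is entire and `(𝔇_α v)(z) = Σ_{n≥1} cₙ β(n) z^{n-1}` is its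
Gelfond–Leontiev derivative, then `(𝔍_α 𝔇_α v)(z) = v(z) - v(0)` for all `z`. -/
theorem glJ_hasSum_and_right_inverse (α : ℝ) (hα : 0 < α) (hα1 : α < 1) :
    (∀ (c : ℕ → ℂ) (f : ℂ → ℂ),
      (∀ z : ℂ, HasSum (fun k : ℕ => c k * z ^ k) (f z)) →
      ∀ z : ℂ,
        HasSum
          (fun k : ℕ =>
            ((Real.Gamma (α * k + 1) / Real.Gamma (α * k + 1 + α) : ℝ) : ℂ) *
              c k * z ^ (k + 1))
          (glJ α f z)) ∧
    (∀ (c : ℕ → ℂ) (v w : ℂ → ℂ),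
      (∀ z : ℂ, HasSum (fun n : ℕ => c n * z ^ n) (v z)) →
      (∀ z : ℂ, HasSum (fun n : ℕ => c (n + 1) * ((glBeta α (n + 1) : ℝ) : ℂ) * z ^ n) (w z)) →
      ∀ z : ℂ, glJ α w z = v z - v 0) :=
  ⟨fun c f hf z => GLaux.part1 hα hα1 c f hf z,
   fun c v w hv hw z => GLaux.part2 hα hα1 c v w hv hw z⟩
end

section
/- Let 0<α<1, g>0, and set λ = Γ(g+1)/Γ(g+1−α). Then the function φ(t)=t^g is a nonzero continuous solution, vanishing at the origin, of the homogeneous Volterra integral equation φ(t) = (λ/Γ(α))·∫_0^t (t−τ)^{α−1}·τ^{−α}·φ(τ) dτ for all t>0. Equivalently: (λ/Γ(α))·∫_0^t (t−τ)^{α−1} τ^{g−α} dτ = t^g for all t>0. In particular, this linear Volterra integral equation with singular kernel does not have a unique solution among continuous functions. -/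
open intervalIntegral Real

lemma real_beta {a b : ℝ} (ha : 0 < a) (hb : 0 < b) :
    ∫ x in (0:ℝ)..1, x ^ (a - 1) * (1 - x) ^ (b - 1)
      = Real.Gamma a * Real.Gamma b / Real.Gamma (a + b) := by
  have hab : Real.Gamma (a + b) ≠ 0 := (Real.Gamma_pos_of_pos (by linarith)).ne'
  have hc : Complex.Gamma a * Complex.Gamma b
      = Complex.Gamma (a + b) * Complex.betaIntegral a b :=
    Complex.Gamma_mul_Gamma_eq_betaIntegral (by simpa using ha) (by simpa using hb)
  have hcongr : Complex.betaIntegral a b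
      = ((∫ x in (0:ℝ)..1, x ^ (a - 1) * (1 - x) ^ (b - 1) : ℝ) : ℂ) := by
    rw [Complex.betaIntegral, ← intervalIntegral.integral_ofReal]
    refine intervalIntegral.integral_congr fun x hx => ?_
    rw [Set.uIcc_of_le (by norm_num : (0:ℝ) ≤ 1)] at hx
    rw [Complex.ofReal_mul, Complex.ofReal_cpow hx.1 (a-1),
      Complex.ofReal_cpow (by linarith [hx.2]) (b-1)]
    push_cast
    ring
  rw [Complex.Gamma_ofReal, Complex.Gamma_ofReal] at hc
  rw [show ((a:ℂ)+b) = ((a+b:ℝ):ℂ) by push_cast; ring, Complex.Gamma_ofReal, hcongr] at hc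
  have := congrArg Complex.re hc
  simp [← Complex.ofReal_mul] at this
  field_simp
  linarith [this]

lemma key_integral {α g : ℝ} (hα : 0 < α) (hα1 : α < 1) (hg : 0 < g)
    {t : ℝ} (ht : 0 < t) :
    ∫ τ in (0:ℝ)..t, (t - τ) ^ (α - 1) * τ ^ (g - α)
      = t ^ g * (Real.Gamma (g - α + 1) * Real.Gamma α / Real.Gamma (g + 1)) := by
  have hsub := intervalIntegral.integral_comp_mul_left
    (a := 0) (b := 1) (fun τ => (t - τ) ^ (α - 1) * τ ^ (g - α)) (c := t) ht.ne'
  simp only [mul_zero, mul_one] at hsub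
  have : ∫ x in (0:ℝ)..1, (t - t * x) ^ (α - 1) * (t * x) ^ (g - α)
      = t ^ (g - 1) * (Real.Gamma (g - α + 1) * Real.Gamma α / Real.Gamma (g + 1)) := by
    have heq : ∀ x ∈ Set.uIcc (0:ℝ) 1,
        (t - t * x) ^ (α - 1) * (t * x) ^ (g - α)
          = t ^ (g - 1) * (x ^ ((g - α + 1) - 1) * (1 - x) ^ (α - 1)) := by
      intro x hx
      rw [Set.uIcc_of_le (by norm_num : (0:ℝ) ≤ 1)] at hx
      have h1 : t - t * x = t * (1 - x) := by ring
      have h2 : t ^ (g - 1) = t ^ (α - 1) * t ^ (g - α) := by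
        rw [← Real.rpow_add ht, show α - 1 + (g - α) = g - 1 by ring]
      rw [h1, Real.mul_rpow ht.le (by linarith [hx.2]), Real.mul_rpow ht.le hx.1, h2,
        show g - α + 1 - 1 = g - α by ring]
      ring
    rw [intervalIntegral.integral_congr heq, intervalIntegral.integral_const_mul,
      real_beta (by linarith) hα, show g - α + 1 + α = g + 1 by ring]
  rw [this] at hsub
  have := hsub.symm
  rw [smul_eq_mul] at this
  have h2 : (∫ τ in (0:ℝ)..t, (t - τ) ^ (α - 1) * τ ^ (g - α))
      = t * (t ^ (g-1) * (Real.Gamma (g - α + 1) * Real.Gamma α / Real.Gamma (g + 1))) := by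
    field_simp at this ⊢
    linarith [this]
  rw [h2, ← mul_assoc, show t * t ^ (g-1) = t ^ g by
    rw [show t * t^(g-1) = t^(1:ℝ) * t^(g-1) by rw [Real.rpow_one],
      ← Real.rpow_add ht]; ring_nf]

/-- **Non-uniqueness for a singular Volterra equation.**
Let `0 < α < 1`, `g > 0`, and `λ = Γ(g+1)/Γ(g+1-α)`.  Then `φ(t) = t^g` is a nonzero
continuous solution, vanishing at the origin, of the homogeneous Volterra equation
`φ(t) = (λ/Γ(α)) ∫₀ᵗ (t-τ)^{α-1} τ^{-α} φ(τ) dτ`; equivalently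
`(λ/Γ(α)) ∫₀ᵗ (t-τ)^{α-1} τ^{g-α} dτ = t^g` for all `t > 0`.  In particular this
linear Volterra integral equation with singular kernel has two distinct continuous
solutions (`t^g` and `0`). -/
theorem volterra_nonuniqueness
    (α : ℝ) (hα : 0 < α) (hα1 : α < 1)
    (g : ℝ) (hg : 0 < g)
    (lam : ℝ) (hlam : lam = Real.Gamma (g + 1) / Real.Gamma (g + 1 - α)) :
    ContinuousOn (fun t : ℝ => t ^ g) (Set.Ici 0) ∧
    ((0 : ℝ) ^ g = 0) ∧
    (∃ t > (0 : ℝ), t ^ g ≠ 0) ∧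
    (∀ t > (0 : ℝ),
      (lam / Real.Gamma α) * ∫ τ in (0 : ℝ)..t, (t - τ) ^ (α - 1) * τ ^ (g - α) = t ^ g) ∧
    (∀ t > (0 : ℝ),
      (t : ℝ) ^ g
        = (lam / Real.Gamma α) * ∫ τ in (0 : ℝ)..t, (t - τ) ^ (α - 1) * τ ^ (-α) * τ ^ g) ∧
    (∃ φ₁ φ₂ : ℝ → ℝ, ContinuousOn φ₁ (Set.Ici 0) ∧ ContinuousOn φ₂ (Set.Ici 0) ∧
      φ₁ ≠ φ₂ ∧
      (∀ t > (0 : ℝ),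
        φ₁ t = (lam / Real.Gamma α) * ∫ τ in (0 : ℝ)..t, (t - τ) ^ (α - 1) * τ ^ (-α) * φ₁ τ) ∧
      (∀ t > (0 : ℝ),
        φ₂ t = (lam / Real.Gamma α) * ∫ τ in (0 : ℝ)..t, (t - τ) ^ (α - 1) * τ ^ (-α) * φ₂ τ)) := by
  have hcont : ContinuousOn (fun t : ℝ => t ^ g) (Set.Ici 0) :=
    continuousOn_id.rpow_const (fun x _ => Or.inr hg.le)
  have hzero : (0 : ℝ) ^ g = 0 := Real.zero_rpow hg.ne'
  have hGα : Real.Gamma α ≠ 0 := (Real.Gamma_pos_of_pos hα).ne'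
  have hGg1 : Real.Gamma (g + 1) ≠ 0 := (Real.Gamma_pos_of_pos (by linarith)).ne'
  have hGga : Real.Gamma (g - α + 1) ≠ 0 := (Real.Gamma_pos_of_pos (by linarith)).ne'
  have hmain : ∀ t > (0 : ℝ),
      (lam / Real.Gamma α) * ∫ τ in (0 : ℝ)..t, (t - τ) ^ (α - 1) * τ ^ (g - α) = t ^ g := by
    intro t ht
    rw [key_integral hα hα1 hg ht, hlam, show g + 1 - α = g - α + 1 by ring]
    field_simp
  have hconv : ∀ t > (0 : ℝ),
      (∫ τ in (0 : ℝ)..t, (t - τ) ^ (α - 1) * τ ^ (-α) * τ ^ g)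
        = ∫ τ in (0 : ℝ)..t, (t - τ) ^ (α - 1) * τ ^ (g - α) := by
    intro t ht
    refine intervalIntegral.integral_congr_ae ?_
    filter_upwards with τ hτ
    rw [Set.uIoc_of_le ht.le] at hτ
    rw [mul_assoc, ← Real.rpow_add hτ.1, show -α + g = g - α by ring]
  have hmain2 : ∀ t > (0 : ℝ),
      (t : ℝ) ^ g
        = (lam / Real.Gamma α) * ∫ τ in (0 : ℝ)..t, (t - τ) ^ (α - 1) * τ ^ (-α) * τ ^ g := by
    intro t ht
    rw [hconv t ht, hmain t ht]
  refine ⟨hcont, hzero, ⟨1, one_pos, by simp⟩, hmain, hmain2, ?_⟩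
  refine ⟨fun t => t ^ g, 0, hcont, continuousOn_const, ?_, hmain2, ?_⟩
  · intro h
    have := congrFun h 1
    simp at this
  · intro t ht
    simp
end

section
/- Let 0<α<1. Let u be continuously differentiable on [0,∞) with |u'(x)| ≤ C(1+x)^N for some constants C>0, N≥0, and let φ be a smooth function on [0,∞) with sup_{t≥0} t^k|φ^{(l)}(t)| < ∞ for all nonnegative integers k,l and φ^{(l)}(0)=0 for all l≥0. Then ∫_0^∞ u'(x)·(I_-^{1−α}φ)(x) dx = ∫_0^∞ φ(t)·(D^α u)(t) dt, where (I_-^{1−α}φ)(x) = (1/Γ(1−α))∫_x^∞ (t−x)^{−α}φ(t)dt and (D^α u)(t) = (1/Γ(1−α))∫_0^t (t−x)^{−α} u'(x) dx is the classical Caputo–Dzhrbashyan derivative of order α. -/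
open MeasureTheory

/-- The right-sided Riemann–Liouville fractional integral `(I₋^{1-α} φ)(x)`. -/
noncomputable def Iminus (α : ℝ) (φ : ℝ → ℝ) (x : ℝ) : ℝ :=
  (1 / Real.Gamma (1 - α)) * ∫ t in Set.Ioi x, (t - x) ^ (-α) * φ t

/-- The classical Caputo–Dzhrbashyan fractional derivative of order `α` of a function
`u` that is `C¹` on `[0,∞)`, here expressed through `u' = derivWithin u (Ici 0)`. -/
noncomputable def caputoDeriv (α : ℝ) (u : ℝ → ℝ) (t : ℝ) : ℝ :=
  (1 / Real.Gamma (1 - α)) *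
    ∫ x in (0 : ℝ)..t, (t - x) ^ (-α) * derivWithin u (Set.Ici 0) x

/-- **The distributional and classical Caputo–Dzhrbashyan derivatives agree.**
Let `0 < α < 1`, let `u` be continuously differentiable on `[0,∞)` with
`|u'(x)| ≤ C (1+x)^N`, and let `φ` be a smooth rapidly decreasing function on `[0,∞)`
all of whose derivatives vanish at `0`.  Then
`∫₀^∞ u'(x) (I₋^{1-α}φ)(x) dx = ∫₀^∞ φ(t) (D^α u)(t) dt`. -/
theorem caputo_distributional_eq_classical
    (α : ℝ) (hα : 0 < α) (hα1 : α < 1)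
    (u : ℝ → ℝ) (hu : ContDiffOn ℝ 1 u (Set.Ici 0))
    (C N : ℝ) (hC : 0 < C) (hN : 0 ≤ N)
    (hu' : ∀ x ∈ Set.Ici (0 : ℝ), |derivWithin u (Set.Ici 0) x| ≤ C * (1 + x) ^ N)
    (φ : ℝ → ℝ)
    (hφsmooth : ContDiffOn ℝ (⊤ : ℕ∞) φ (Set.Ici 0))
    (hφdecay : ∀ k l : ℕ, ∃ B : ℝ, ∀ t ∈ Set.Ici (0 : ℝ),
      t ^ k * |iteratedDerivWithin l φ (Set.Ici 0) t| ≤ B)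
    (hφflat : ∀ l : ℕ, iteratedDerivWithin l φ (Set.Ici 0) 0 = 0) :
    ∫ x in Set.Ioi (0 : ℝ), derivWithin u (Set.Ici 0) x * Iminus α φ x
      = ∫ t in Set.Ioi (0 : ℝ), φ t * caputoDeriv α u t := by
  have h1α : (0:ℝ) < 1 - α := by linarith
  set f := derivWithin u (Set.Ici 0) with hfdef
  have hfc : ContinuousOn f (Set.Ici 0) :=
    hu.continuousOn_derivWithin (uniqueDiffOn_Ici 0) le_rfl
  set fe : ℝ → ℝ := fun x => f (max x 0) with hfedef
  set pe : ℝ → ℝ := fun t => φ (max t 0) with hpedef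
  have hmaxc : Continuous fun x : ℝ => max x 0 := continuous_id.max continuous_const
  have hfe : Continuous fe := hfc.comp_continuous hmaxc fun x => Set.mem_Ici.2 (le_max_right _ _)
  have hpe : Continuous pe :=
    hφsmooth.continuousOn.comp_continuous hmaxc fun x => Set.mem_Ici.2 (le_max_right _ _)
  have hfe_eq : ∀ x : ℝ, 0 ≤ x → fe x = f x := fun x hx => by
    simp [hfedef, max_eq_left hx]
  have hpe_eq : ∀ t : ℝ, 0 ≤ t → pe t = φ t := fun t ht => by
    simp [hpedef, max_eq_left ht]
  -- decay bound on φ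
  obtain ⟨K, hK0, hK⟩ : ∃ K : ℝ, 0 ≤ K ∧ ∀ t : ℝ, 0 ≤ t →
      |φ t| * ((1 + t) ^ N * t ^ (1 - α)) * (1 + t ^ 2) ≤ K := by
    set n := ⌈N⌉₊ with hn
    set M := n + 3 with hM
    obtain ⟨B0, hB0⟩ := hφdecay 0 0
    obtain ⟨B1, hB1⟩ := hφdecay M 0
    have hB0' : ∀ t : ℝ, 0 ≤ t → |φ t| ≤ B0 := fun t ht => by
      simpa [iteratedDerivWithin_zero] using hB0 t ht
    have hB1' : ∀ t : ℝ, 0 ≤ t → t ^ M * |φ t| ≤ B1 := fun t ht => by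
      simpa [iteratedDerivWithin_zero] using hB1 t ht
    have hB0pos : 0 ≤ B0 := le_trans (abs_nonneg _) (hB0' 0 le_rfl)
    have hB1pos : 0 ≤ B1 := by
      have h := hB1' 0 le_rfl
      rw [hM] at h
      simpa [pow_succ] using h
    refine ⟨2 ^ M * (B0 + B1), by positivity, fun t ht => ?_⟩
    have h1t : (0:ℝ) < 1 + t := by linarith
    have hrN : (1 + t) ^ N ≤ (1 + t) ^ (n : ℕ) := by
      rw [← Real.rpow_natCast (1 + t) n]
      exact Real.rpow_le_rpow_of_exponent_le (by linarith) (Nat.le_ceil N)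
    have hrα : t ^ (1 - α) ≤ 1 + t := by
      rcases le_total t 1 with h | h
      · calc t ^ (1 - α) ≤ 1 := Real.rpow_le_one ht h (by linarith)
          _ ≤ 1 + t := by linarith
      · calc t ^ (1 - α) ≤ t ^ (1:ℝ) :=
              Real.rpow_le_rpow_of_exponent_le h (by linarith)
          _ = t := Real.rpow_one t
          _ ≤ 1 + t := by linarith
    have hsq : 1 + t ^ 2 ≤ (1 + t) ^ 2 := by nlinarith
    have hstep : (1 + t) ^ N * t ^ (1 - α) * (1 + t ^ 2) ≤ (1 + t) ^ M := by
      calc (1 + t) ^ N * t ^ (1 - α) * (1 + t ^ 2)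
          ≤ (1 + t) ^ (n : ℕ) * (1 + t) * ((1 + t) ^ 2) := by
            have h1 : 0 ≤ t ^ (1 - α) := Real.rpow_nonneg ht _
            have h2 : 0 ≤ (1 + t) ^ N := Real.rpow_nonneg h1t.le _
            have h3 : (0:ℝ) ≤ 1 + t ^ 2 := by positivity
            exact mul_le_mul (mul_le_mul hrN hrα h1 (pow_nonneg h1t.le n)) hsq h3
              (by positivity)
        _ = (1 + t) ^ M := by rw [hM]; ring
    have hpow2 : (1 + t) ^ M ≤ 2 ^ M * (1 + t ^ M) := by
      have h2 : (1:ℝ) + t ≤ 2 * max 1 t := by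
        rcases le_total t 1 with h | h
        · rw [max_eq_left h]; linarith
        · rw [max_eq_right h]; linarith
      calc (1 + t) ^ M ≤ (2 * max 1 t) ^ M := pow_le_pow_left₀ h1t.le h2 M
        _ = 2 ^ M * (max 1 t) ^ M := mul_pow 2 _ M
        _ ≤ 2 ^ M * (1 + t ^ M) := by
            have : (max 1 t) ^ M ≤ 1 + t ^ M := by
              rcases le_total t 1 with h | h
              · rw [max_eq_left h]; rw [one_pow]
                have : 0 ≤ t ^ M := pow_nonneg ht M
                linarith
              · rw [max_eq_right h]
                have : (0:ℝ) ≤ 1 := zero_le_one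
                linarith
            exact mul_le_mul_of_nonneg_left this (by positivity)
    calc |φ t| * ((1 + t) ^ N * t ^ (1 - α)) * (1 + t ^ 2)
        = |φ t| * ((1 + t) ^ N * t ^ (1 - α) * (1 + t ^ 2)) := by ring
      _ ≤ |φ t| * (1 + t) ^ M :=
          mul_le_mul_of_nonneg_left hstep (abs_nonneg _)
      _ ≤ |φ t| * (2 ^ M * (1 + t ^ M)) :=
          mul_le_mul_of_nonneg_left hpow2 (abs_nonneg _)
      _ = 2 ^ M * (|φ t| + t ^ M * |φ t|) := by ring
      _ ≤ 2 ^ M * (B0 + B1) := by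
          have := add_le_add (hB0' t ht) (hB1' t ht)
          exact mul_le_mul_of_nonneg_left this (by positivity)
  -- the double-variable kernel
  set Hf : ℝ → ℝ → ℝ :=
    fun t x => Set.indicator (Set.Ioo 0 t) (fun x => pe t * ((t - x) ^ (-α) * fe x)) x
    with hHf
  -- measurability of the uncurried kernel
  have hmeas : AEStronglyMeasurable (Function.uncurry Hf)
      ((volume : Measure ℝ).prod volume) := by
    have hS : MeasurableSet {p : ℝ × ℝ | 0 < p.2 ∧ p.2 < p.1} :=
      (measurableSet_lt measurable_const measurable_snd).inter
        (measurableSet_lt measurable_snd measurable_fst)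
    have hF : Measurable fun p : ℝ × ℝ => pe p.1 * ((p.1 - p.2) ^ (-α) * fe p.2) := by
      apply (hpe.measurable.comp measurable_fst).mul
      apply Measurable.mul
      · fun_prop
      · exact hfe.measurable.comp measurable_snd
    have huncurry : Function.uncurry Hf =
        Set.indicator {p : ℝ × ℝ | 0 < p.2 ∧ p.2 < p.1}
          (fun p => pe p.1 * ((p.1 - p.2) ^ (-α) * fe p.2)) := by
      funext p
      simp only [Function.uncurry, hHf, Set.indicator_apply, Set.mem_Ioo, Set.mem_setOf_eq]
    rw [huncurry]
    exact (hF.indicator hS).aestronglyMeasurable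
  -- integrability of the rpow kernel on Ioo
  have hIOo : ∀ t : ℝ, 0 < t → IntegrableOn (fun x => (t - x) ^ (-α)) (Set.Ioo 0 t) := by
    intro t ht
    have h : IntervalIntegrable (fun x : ℝ => x ^ (-α)) volume t 0 :=
      intervalIntegral.intervalIntegrable_rpow' (by linarith)
    have h2 : IntervalIntegrable (fun x : ℝ => (t - x) ^ (-α)) volume 0 t := by
      simpa using h.comp_sub_left t
    rw [intervalIntegrable_iff_integrableOn_Ioc_of_le ht.le] at h2
    exact h2.mono_set Set.Ioo_subset_Ioc_self
  have hGint : ∀ t : ℝ, 0 < t →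
      IntegrableOn (fun x => (t - x) ^ (-α) * fe x) (Set.Ioo 0 t) := by
    intro t ht
    exact (((integrableOn_Icc_iff_integrableOn_Ioo (μ := volume) (a := 0) (b := t)).2 (hIOo t ht)).mul_continuousOn
      hfe.continuousOn isCompact_Icc).mono_set Set.Ioo_subset_Icc_self
  have hHint : ∀ t : ℝ, Integrable (Hf t) := by
    intro t
    rcases le_or_gt t 0 with ht | ht
    · have : Hf t = fun _ => 0 := by
        funext x
        simp [hHf, Set.Ioo_eq_empty (by simpa using ht : ¬ (0:ℝ) < t)]
      rw [this]
      exact integrable_zero _ _ _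
    · rw [hHf]
      rw [integrable_indicator_iff measurableSet_Ioo]
      exact (hGint t ht).const_mul (pe t)
  -- the value of the rpow integral
  have hval : ∀ t : ℝ, 0 < t →
      (∫ x in Set.Ioo (0:ℝ) t, (t - x) ^ (-α)) = t ^ (1 - α) / (1 - α) := by
    intro t ht
    rw [← integral_Ioc_eq_integral_Ioo, ← intervalIntegral.integral_of_le ht.le]
    rw [intervalIntegral.integral_comp_sub_left (fun x => x ^ (-α)) t]
    simp only [sub_self, sub_zero]
    rw [integral_rpow (Or.inl (by linarith))]
    rw [Real.zero_rpow (by linarith : -α + 1 ≠ 0)]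
    rw [show -α + 1 = 1 - α by ring]
    ring
  -- norm bound
  have hnormbound : ∀ t : ℝ,
      (∫ x, ‖Hf t x‖) ≤ C / (1 - α) * K * (1 + t ^ 2)⁻¹ := by
    intro t
    rcases le_or_gt t 0 with ht | ht
    · have h0 : Hf t = fun _ => 0 := by
        funext x
        simp [hHf, Set.Ioo_eq_empty (by simpa using ht : ¬ (0:ℝ) < t)]
      rw [h0]
      simp only [norm_zero, integral_zero]
      positivity
    · have hnorm_eq : (fun x => ‖Hf t x‖) =
          (Set.Ioo (0:ℝ) t).indicator (fun x => ‖pe t * ((t - x) ^ (-α) * fe x)‖) := by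
        funext x
        simp [hHf, norm_indicator_eq_indicator_norm]
      calc (∫ x, ‖Hf t x‖)
          = ∫ x in Set.Ioo (0:ℝ) t, ‖pe t * ((t - x) ^ (-α) * fe x)‖ := by
            rw [hnorm_eq, integral_indicator measurableSet_Ioo]
        _ ≤ ∫ x in Set.Ioo (0:ℝ) t, (|φ t| * (C * (1 + t) ^ N)) * (t - x) ^ (-α) := by
            apply setIntegral_mono_on (((hGint t ht).const_mul (pe t)).norm)
              ((hIOo t ht).const_mul _) measurableSet_Ioo
            intro x hx
            have hx0 : 0 ≤ x := hx.1.le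
            have htx : 0 ≤ t - x := by linarith [hx.2]
            rw [norm_mul, norm_mul, Real.norm_eq_abs, Real.norm_eq_abs, Real.norm_eq_abs,
              abs_of_nonneg (Real.rpow_nonneg htx _), hpe_eq t ht.le, hfe_eq x hx0]
            have hfx : |f x| ≤ C * (1 + t) ^ N := by
              calc |f x| ≤ C * (1 + x) ^ N := hu' x hx0
                _ ≤ C * (1 + t) ^ N := by
                    have h := Real.rpow_le_rpow (by linarith : (0:ℝ) ≤ 1 + x)
                      (by linarith [hx.2] : (1:ℝ) + x ≤ 1 + t) hN
                    exact mul_le_mul_of_nonneg_left h hC.le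
            calc |φ t| * ((t - x) ^ (-α) * |f x|)
                ≤ |φ t| * ((t - x) ^ (-α) * (C * (1 + t) ^ N)) := by
                  apply mul_le_mul_of_nonneg_left _ (abs_nonneg _)
                  exact mul_le_mul_of_nonneg_left hfx (Real.rpow_nonneg htx _)
              _ = (|φ t| * (C * (1 + t) ^ N)) * (t - x) ^ (-α) := by ring
        _ = (|φ t| * (C * (1 + t) ^ N)) * (t ^ (1 - α) / (1 - α)) := by
            rw [integral_const_mul, hval t ht]
        _ ≤ C / (1 - α) * K * (1 + t ^ 2)⁻¹ := by
            have h1 : |φ t| * ((1 + t) ^ N * t ^ (1 - α)) ≤ K * (1 + t ^ 2)⁻¹ := by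
              rw [← div_eq_mul_inv, le_div_iff₀ (by positivity : (0:ℝ) < 1 + t ^ 2)]
              exact hK t ht.le
            calc (|φ t| * (C * (1 + t) ^ N)) * (t ^ (1 - α) / (1 - α))
                = (C * (1 - α)⁻¹) * (|φ t| * ((1 + t) ^ N * t ^ (1 - α))) := by
                  rw [div_eq_mul_inv]; ring
              _ ≤ (C * (1 - α)⁻¹) * (K * (1 + t ^ 2)⁻¹) :=
                  mul_le_mul_of_nonneg_left h1 (by positivity)
              _ = C / (1 - α) * K * (1 + t ^ 2)⁻¹ := by rw [div_eq_mul_inv]; ring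
  -- integrability of the uncurried kernel
  have hint : Integrable (Function.uncurry Hf) ((volume : Measure ℝ).prod volume) := by
    refine (integrable_prod_iff hmeas).2 ⟨Filter.Eventually.of_forall fun t => hHint t, ?_⟩
    apply Integrable.mono' (integrable_inv_one_add_sq.const_mul (C / (1 - α) * K))
      hmeas.norm.integral_prod_right'
    refine Filter.Eventually.of_forall fun t => ?_
    rw [Real.norm_eq_abs, abs_of_nonneg (integral_nonneg fun x => norm_nonneg _)]
    exact hnormbound t
  have key := integral_integral_swap hint
  -- left-hand side pointwise identity
  have hL : ∀ x ∈ Set.Ioi (0:ℝ), f x * Iminus α φ x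
      = (1 / Real.Gamma (1 - α)) * ∫ t, Hf t x := by
    intro x hx
    have hx0 : (0:ℝ) < x := hx
    have hHfx : (fun t => Hf t x)
        = (Set.Ioi x).indicator (fun t => pe t * ((t - x) ^ (-α) * fe x)) := by
      funext t
      by_cases ht : x < t
      · simp [hHf, Set.indicator_apply, Set.mem_Ioo, Set.mem_Ioi, hx0, ht]
      · simp [hHf, Set.indicator_apply, Set.mem_Ioo, Set.mem_Ioi, hx0, ht]
    rw [hHfx, integral_indicator measurableSet_Ioi]
    have hcongr : ∫ t in Set.Ioi x, pe t * ((t - x) ^ (-α) * fe x)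
        = ∫ t in Set.Ioi x, ((t - x) ^ (-α) * φ t) * f x := by
      apply setIntegral_congr_fun measurableSet_Ioi
      intro t ht
      dsimp only
      rw [hpe_eq t (le_of_lt (lt_trans hx0 ht)), hfe_eq x hx0.le]
      ring
    rw [hcongr, integral_mul_const, Iminus]
    ring
  -- right-hand side pointwise identity
  have hR : ∀ t ∈ Set.Ioi (0:ℝ), φ t * caputoDeriv α u t
      = (1 / Real.Gamma (1 - α)) * ∫ x, Hf t x := by
    intro t ht
    have ht0 : (0:ℝ) < t := ht
    have h1 : ∫ x, Hf t x
        = ∫ x in Set.Ioo (0:ℝ) t, pe t * ((t - x) ^ (-α) * fe x) := by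
      rw [hHf, integral_indicator measurableSet_Ioo]
    have h2 : ∫ x in Set.Ioo (0:ℝ) t, pe t * ((t - x) ^ (-α) * fe x)
        = pe t * ∫ x in Set.Ioo (0:ℝ) t, (t - x) ^ (-α) * fe x := integral_const_mul _ _
    have h3 : ∫ x in Set.Ioo (0:ℝ) t, (t - x) ^ (-α) * fe x
        = ∫ x in Set.Ioo (0:ℝ) t, (t - x) ^ (-α) * f x := by
      apply setIntegral_congr_fun measurableSet_Ioo
      intro x hx
      dsimp only
      rw [hfe_eq x hx.1.le]
    have h4 : ∫ x in Set.Ioo (0:ℝ) t, (t - x) ^ (-α) * f x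
        = ∫ x in (0:ℝ)..t, (t - x) ^ (-α) * f x := by
      rw [intervalIntegral.integral_of_le ht0.le, integral_Ioc_eq_integral_Ioo]
    rw [h1, h2, h3, h4, hpe_eq t ht0.le, caputoDeriv]
    ring
  -- put everything together
  calc ∫ x in Set.Ioi (0:ℝ), f x * Iminus α φ x
      = ∫ x in Set.Ioi (0:ℝ), (1 / Real.Gamma (1 - α)) * ∫ t, Hf t x :=
        setIntegral_congr_fun measurableSet_Ioi hL
    _ = (1 / Real.Gamma (1 - α)) * ∫ x in Set.Ioi (0:ℝ), ∫ t, Hf t x :=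
        integral_const_mul _ _
    _ = (1 / Real.Gamma (1 - α)) * ∫ x, ∫ t, Hf t x := by
        congr 1
        apply setIntegral_eq_integral_of_forall_compl_eq_zero
        intro x hx
        have hx0 : x ≤ 0 := by simpa using hx
        have hz : (fun t => Hf t x) = fun _ => 0 := by
          funext t
          exact Set.indicator_of_notMem (by
            simp only [Set.mem_Ioo, not_and]
            intro h; linarith) _
        rw [hz, integral_zero]
    _ = (1 / Real.Gamma (1 - α)) * ∫ t, ∫ x, Hf t x := by rw [← key]
    _ = (1 / Real.Gamma (1 - α)) * ∫ t in Set.Ioi (0:ℝ), ∫ x, Hf t x := by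
        congr 1
        symm
        apply setIntegral_eq_integral_of_forall_compl_eq_zero
        intro t ht
        have ht0 : t ≤ 0 := by simpa using ht
        have hz : Hf t = fun _ => 0 := by
          funext x
          simp [hHf, Set.Ioo_eq_empty (by simpa using ht0 : ¬ (0:ℝ) < t)]
        rw [hz, integral_zero]
    _ = ∫ t in Set.Ioi (0:ℝ), (1 / Real.Gamma (1 - α)) * ∫ x, Hf t x :=
        (integral_const_mul _ _).symm
    _ = ∫ t in Set.Ioi (0:ℝ), φ t * caputoDeriv α u t :=
        (setIntegral_congr_fun measurableSet_Ioi hR).symm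
end
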